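/- arXiv:2112.15388 — 3 statements merged into one kernel-verified Lean document; each statement's English description precedes it below -/
import Mathlib

section
/- Moment relations on the unit sphere: Let Z_1, …, Z_n be random variables such that Z_1^2 + ⋯ + Z_n^2 = 1 and, for all positive integers m_1, …, m_r with m_1 + ⋯ + m_r ≤ 4, the mixed moment β_{2m_1,…,2m_r} := E[Z_{i_1}^{2m_1} ⋯ Z_{i_r}^{2m_r}] (for distinct indices) is invariant under permutations of the indices. Then β_2 = 1/n and the following identities hold: β_4 = 1/n − (n−1) β_{2,2}; β_{4,2} = (1/2) β_{2,2} − ((n−2)/2) β_{2,2,2}; β_6 = 1/n − (3(n−1)/2) β_{2,2} + ((n−1)(n−2)/2) β_{2,2,2}; β_{6,2} = (1/2) β_{2,2} − (5(n−2)/6) β_{2,2,2} + ((n−2)(n−3)/3) β_{2,2,2,2} − β_{4,4}; β_{4,2,2} = (1/3) β_{2,2,2} + ((3−n)/3) β_{2,2,2,2}; and β_8 = 1/n + 2(1−n) β_{2,2} + ((4n²/3) − 4n + 8/3) β_{2,2,2} + (−n³/3 + 2n² − 11n/3 + 2) β_{2,2,2,2} + (n−1) β_{4,4}. -/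
open MeasureTheory Filter Finset

noncomputable section

variable {Ω : Type*} [MeasurableSpace Ω]

/-- `mom P Z [m₁, …, m_r]` is the mixed moment `β_{2m₁,…,2m_r} = E[Z_{i₁}^{2m₁} ⋯ Z_{i_r}^{2m_r}]`
computed with the distinct indices `i₁ = 0, …, i_r = r−1`; coordinates of `Z` beyond the list
get exponent `0`.  (Under the permutation-invariance hypothesis the choice of distinct indices
is irrelevant.) -/
def mom {n : ℕ} (P : Measure Ω) (Z : Fin n → Ω → ℝ) (e : List ℕ) : ℝ :=
  ∫ ω, ∏ i : Fin n, Z i ω ^ (2 * e.getD i.val 0) ∂P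

/-- `S_j = a₁^j + ⋯ + a_n^j`. -/
def Spow {n : ℕ} (a : Fin n → ℝ) (j : ℕ) : ℝ := ∑ i, a i ^ j

section Helpers

set_option linter.unusedSectionVars false

variable {n : ℕ} {P : Measure Ω} [IsProbabilityMeasure P] {Z : Fin n → Ω → ℝ}

/-- abstract mixed moment indexed by an exponent function -/
def JJ (P : Measure Ω) (Z : Fin n → Ω → ℝ) (m : Fin n → ℕ) : ℝ :=
  ∫ ω, ∏ i, Z i ω ^ (2 * m i) ∂P

lemma abs_prod_le_one (hsphere : ∀ ω, ∑ i, (Z i ω) ^ 2 = 1) (m : Fin n → ℕ) (ω : Ω) :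
    |∏ i, Z i ω ^ (2 * m i)| ≤ 1 := by
  rw [Finset.abs_prod]
  refine Finset.prod_le_one (fun i _ => abs_nonneg _) (fun i _ => ?_)
  rw [abs_pow]
  refine pow_le_one₀ (abs_nonneg _) ?_
  have h1 : (Z i ω) ^ 2 ≤ 1 := by
    rw [← hsphere ω]
    exact Finset.single_le_sum (fun j _ => sq_nonneg (Z j ω)) (Finset.mem_univ i)
  nlinarith [abs_nonneg (Z i ω), sq_abs (Z i ω)]

lemma integ (hmeas : ∀ i, Measurable (Z i)) (hsphere : ∀ ω, ∑ i, (Z i ω) ^ 2 = 1)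
    (m : Fin n → ℕ) : Integrable (fun ω => ∏ i, Z i ω ^ (2 * m i)) P := by
  apply (integrable_const (1:ℝ)).mono'
  · exact (Finset.measurable_prod _ (fun i _ => (hmeas i).pow_const _)).aestronglyMeasurable
  · exact ae_of_all _ (fun ω => abs_prod_le_one hsphere m ω)

lemma sum_rel (hmeas : ∀ i, Measurable (Z i)) (hsphere : ∀ ω, ∑ i, (Z i ω) ^ 2 = 1)
    (m : Fin n → ℕ) :
    ∑ j, JJ P Z (fun i => m i + if i = j then 1 else 0) = JJ P Z m := by
  have key : ∀ j : Fin n, (fun ω => ∏ i, Z i ω ^ (2 * (m i + if i = j then 1 else 0)))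
      = fun ω => (∏ i, Z i ω ^ (2 * m i)) * (Z j ω) ^ 2 := by
    intro j
    funext ω
    simp only [mul_add, pow_add, mul_ite, mul_one, mul_zero, pow_zero, mul_ite, mul_one]
    rw [Finset.prod_mul_distrib]
    congr 1
    simp only [pow_ite, pow_zero, Finset.prod_ite_eq', Finset.mem_univ, if_true]
  have hint : ∀ j : Fin n, Integrable (fun ω => (∏ i, Z i ω ^ (2 * m i)) * (Z j ω) ^ 2) P := by
    intro j
    have := integ (P := P) hmeas hsphere (fun i => m i + if i = j then 1 else 0)
    rwa [key j] at this
  calc ∑ j, JJ P Z (fun i => m i + if i = j then 1 else 0)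
      = ∑ j, ∫ ω, (∏ i, Z i ω ^ (2 * m i)) * (Z j ω) ^ 2 ∂P := by
        refine Finset.sum_congr rfl (fun j _ => ?_)
        unfold JJ; rw [key j]
    _ = ∫ ω, ∑ j, (∏ i, Z i ω ^ (2 * m i)) * (Z j ω) ^ 2 ∂P := by
        rw [MeasureTheory.integral_finset_sum _ (fun j _ => hint j)]
    _ = JJ P Z m := by
        unfold JJ
        congr 1; funext ω
        rw [← Finset.mul_sum, hsphere ω, mul_one]

lemma sum_getD_range (e : List ℕ) : ∀ k : ℕ, e.length ≤ k →
    ∑ i ∈ Finset.range k, e.getD i 0 = e.sum := by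
  induction e with
  | nil => intro k _; simp
  | cons a t ih =>
    intro k hk
    obtain ⟨m, rfl⟩ : ∃ m, k = m + 1 := ⟨k - 1, by simp at hk; omega⟩
    rw [Finset.sum_range_succ']
    simp only [List.getD_cons_succ, List.getD_cons_zero]
    rw [ih m (by simp at hk; omega)]
    simp [add_comm]

lemma sum_getD (e : List ℕ) (h : e.length ≤ n) : ∑ i : Fin n, e.getD i.val 0 = e.sum := by
  rw [Fin.sum_univ_eq_sum_range (fun i => e.getD i 0)]
  exact sum_getD_range e n h

lemma getD_append_one (e : List ℕ) (k : ℕ) :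
    (e ++ [1]).getD k 0 = if k = e.length then 1 else e.getD k 0 := by
  rcases Nat.lt_trichotomy k e.length with h | h | h
  · rw [List.getD_append _ _ _ _ h, if_neg (by omega)]
  · subst h
    rw [List.getD_append_right _ _ _ _ le_rfl, if_pos rfl]; simp
  · rw [List.getD_eq_default _ _ (by simp; omega), if_neg (by omega),
      List.getD_eq_default _ _ (by omega)]

lemma Jperm
    (hPerm : ∀ (m : Fin n → ℕ) (σ : Equiv.Perm (Fin n)), (∑ i, m i) ≤ 4 →
      ∫ ω, ∏ i, Z i ω ^ (2 * m i) ∂P = ∫ ω, ∏ i, Z i ω ^ (2 * m (σ i)) ∂P)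
    (m m' : Fin n → ℕ) (σ : Equiv.Perm (Fin n)) (h4 : ∑ i, m' i ≤ 4)
    (h : ∀ i, m' (σ i) = m i) : JJ P Z m = JJ P Z m' := by
  have h2 : m = fun i => m' (σ i) := by funext i; rw [h i]
  rw [h2]
  exact (hPerm m' σ h4).symm

lemma bump_beyond
    (hPerm : ∀ (m : Fin n → ℕ) (σ : Equiv.Perm (Fin n)), (∑ i, m i) ≤ 4 →
      ∫ ω, ∏ i, Z i ω ^ (2 * m i) ∂P = ∫ ω, ∏ i, Z i ω ^ (2 * m (σ i)) ∂P)
    (e : List ℕ) (hs : e.sum + 1 ≤ 4) (hlen : e.length < n) (j : Fin n)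
    (hj : e.length ≤ j.val) :
    JJ P Z (fun i => e.getD i.val 0 + if i = j then 1 else 0)
      = JJ P Z (fun i => (e ++ [1]).getD i.val 0) := by
  refine Jperm hPerm _ _ (Equiv.swap ⟨e.length, hlen⟩ j) ?_ ?_
  · rw [sum_getD _ (by simp; omega)]; simpa using hs
  · intro i
    by_cases hij : i = j
    · subst hij
      rw [Equiv.swap_apply_right, getD_append_one, if_pos rfl,
        List.getD_eq_default _ _ hj, if_pos rfl]
    · by_cases hia : i = ⟨e.length, hlen⟩
      · subst hia
        rw [Equiv.swap_apply_left, getD_append_one, if_neg (by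
          intro h; exact hij (Fin.ext (by simp [← h])))]
        rw [List.getD_eq_default _ _ hj, List.getD_eq_default _ _ (by simp),
          if_neg hij]
      · rw [Equiv.swap_apply_of_ne_of_ne hia hij, getD_append_one,
          if_neg (by intro h; exact hia (Fin.ext (by simpa using h))), if_neg hij, add_zero]

end Helpers

/-- Moment relations on the unit sphere. -/
theorem moment_relations_unit_sphere
    (P : Measure Ω) [IsProbabilityMeasure P]
    (n : ℕ) (hn : 4 ≤ n) (Z : Fin n → Ω → ℝ)
    (hmeas : ∀ i, Measurable (Z i))
    (hsphere : ∀ ω, ∑ i, (Z i ω) ^ 2 = 1)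
    (hPerm : ∀ (m : Fin n → ℕ) (σ : Equiv.Perm (Fin n)), (∑ i, m i) ≤ 4 →
      ∫ ω, ∏ i, Z i ω ^ (2 * m i) ∂P = ∫ ω, ∏ i, Z i ω ^ (2 * m (σ i)) ∂P) :
    mom P Z [1] = 1 / (n : ℝ) ∧
    mom P Z [2] = 1 / (n : ℝ) - ((n : ℝ) - 1) * mom P Z [1, 1] ∧
    mom P Z [2, 1] = (1 / 2) * mom P Z [1, 1] - ((n : ℝ) - 2) / 2 * mom P Z [1, 1, 1] ∧
    mom P Z [3] = 1 / (n : ℝ) - 3 * ((n : ℝ) - 1) / 2 * mom P Z [1, 1] +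
      ((n : ℝ) - 1) * ((n : ℝ) - 2) / 2 * mom P Z [1, 1, 1] ∧
    mom P Z [3, 1] = (1 / 2) * mom P Z [1, 1] - 5 * ((n : ℝ) - 2) / 6 * mom P Z [1, 1, 1] +
      ((n : ℝ) - 2) * ((n : ℝ) - 3) / 3 * mom P Z [1, 1, 1, 1] - mom P Z [2, 2] ∧
    mom P Z [2, 1, 1] = (1 / 3) * mom P Z [1, 1, 1] +
      (3 - (n : ℝ)) / 3 * mom P Z [1, 1, 1, 1] ∧
    mom P Z [4] = 1 / (n : ℝ) + 2 * (1 - (n : ℝ)) * mom P Z [1, 1] +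
      (4 * (n : ℝ) ^ 2 / 3 - 4 * (n : ℝ) + 8 / 3) * mom P Z [1, 1, 1] +
      (-(n : ℝ) ^ 3 / 3 + 2 * (n : ℝ) ^ 2 - 11 * (n : ℝ) / 3 + 2) * mom P Z [1, 1, 1, 1] +
      ((n : ℝ) - 1) * mom P Z [2, 2] := by
  -- anchors
  obtain ⟨a0, ha0⟩ : ∃ a : Fin n, a.val = 0 := ⟨⟨0, by omega⟩, rfl⟩
  obtain ⟨a1, ha1⟩ : ∃ a : Fin n, a.val = 1 := ⟨⟨1, by omega⟩, rfl⟩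
  obtain ⟨a2, ha2⟩ : ∃ a : Fin n, a.val = 2 := ⟨⟨2, by omega⟩, rfl⟩
  have hmom : ∀ e : List ℕ, mom P Z e = JJ P Z (fun i => e.getD i.val 0) := fun _ => rfl
  have hval : ∀ (j : Fin n) (a : Fin n) (k : ℕ), a.val = k → j ≠ a → j.val ≠ k := by
    intro j a k hk hja h
    exact hja (Fin.ext (by rw [h, hk]))
  -- direct bump function identities
  have d1 : (fun i : Fin n => [1].getD i.val 0 + if i = a0 then 1 else 0)
      = fun i => [2].getD i.val 0 := by
    funext i; obtain ⟨iv, hi⟩ := i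
    simp only [Fin.ext_iff, ha0]
    rcases iv with _|_|iv <;> simp [List.getD]
  have d2 : (fun i : Fin n => [1,1].getD i.val 0 + if i = a0 then 1 else 0)
      = fun i => [2,1].getD i.val 0 := by
    funext i; obtain ⟨iv, hi⟩ := i
    simp only [Fin.ext_iff, ha0]
    rcases iv with _|_|_|iv <;> simp [List.getD]
  have d3 : (fun i : Fin n => [2].getD i.val 0 + if i = a0 then 1 else 0)
      = fun i => [3].getD i.val 0 := by
    funext i; obtain ⟨iv, hi⟩ := i
    simp only [Fin.ext_iff, ha0]
    rcases iv with _|_|iv <;> simp [List.getD]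
  have d4 : (fun i : Fin n => [1,1,1].getD i.val 0 + if i = a0 then 1 else 0)
      = fun i => [2,1,1].getD i.val 0 := by
    funext i; obtain ⟨iv, hi⟩ := i
    simp only [Fin.ext_iff, ha0]
    rcases iv with _|_|_|_|iv <;> simp [List.getD]
  have d5 : (fun i : Fin n => [2,1].getD i.val 0 + if i = a0 then 1 else 0)
      = fun i => [3,1].getD i.val 0 := by
    funext i; obtain ⟨iv, hi⟩ := i
    simp only [Fin.ext_iff, ha0]
    rcases iv with _|_|_|iv <;> simp [List.getD]
  have d6 : (fun i : Fin n => [2,1].getD i.val 0 + if i = a1 then 1 else 0)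
      = fun i => [2,2].getD i.val 0 := by
    funext i; obtain ⟨iv, hi⟩ := i
    simp only [Fin.ext_iff, ha1]
    rcases iv with _|_|_|iv <;> simp [List.getD]
  have d7 : (fun i : Fin n => [3].getD i.val 0 + if i = a0 then 1 else 0)
      = fun i => [4].getD i.val 0 := by
    funext i; obtain ⟨iv, hi⟩ := i
    simp only [Fin.ext_iff, ha0]
    rcases iv with _|_|iv <;> simp [List.getD]
  -- swap bump identities
  have s1 : JJ P Z (fun i => [1,1].getD i.val 0 + if i = a1 then 1 else 0)
      = JJ P Z (fun i => [2,1].getD i.val 0) := by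
    refine Jperm hPerm _ _ (Equiv.swap a0 a1) ?_ ?_
    · rw [sum_getD _ (by simp; omega)]; norm_num
    · intro i
      by_cases h0 : i = a0
      · subst h0
        rw [Equiv.swap_apply_left]
        simp [ha0, ha1, Fin.ext_iff, List.getD]
      · by_cases h1 : i = a1
        · subst h1
          rw [Equiv.swap_apply_right]
          simp [ha0, ha1, List.getD]
        · rw [Equiv.swap_apply_of_ne_of_ne h0 h1, if_neg h1, add_zero]
          have hv0 := hval i a0 0 ha0 h0
          have hv1 := hval i a1 1 ha1 h1
          obtain ⟨iv, hi⟩ := i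
          simp only [Fin.ext_iff] at hv0 hv1 ⊢
          rcases iv with _|_|_|iv <;> simp_all [List.getD]
  have s2 : JJ P Z (fun i => [1,1,1].getD i.val 0 + if i = a1 then 1 else 0)
      = JJ P Z (fun i => [2,1,1].getD i.val 0) := by
    refine Jperm hPerm _ _ (Equiv.swap a0 a1) ?_ ?_
    · rw [sum_getD _ (by simp; omega)]; norm_num
    · intro i
      by_cases h0 : i = a0
      · subst h0
        rw [Equiv.swap_apply_left]
        simp [ha0, ha1, Fin.ext_iff, List.getD]
      · by_cases h1 : i = a1
        · subst h1
          rw [Equiv.swap_apply_right]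
          simp [ha0, ha1, List.getD]
        · rw [Equiv.swap_apply_of_ne_of_ne h0 h1, if_neg h1, add_zero]
          have hv0 := hval i a0 0 ha0 h0
          have hv1 := hval i a1 1 ha1 h1
          obtain ⟨iv, hi⟩ := i
          simp only [Fin.ext_iff] at hv0 hv1 ⊢
          rcases iv with _|_|_|_|iv <;> simp_all [List.getD]
  have s3 : JJ P Z (fun i => [1,1,1].getD i.val 0 + if i = a2 then 1 else 0)
      = JJ P Z (fun i => [2,1,1].getD i.val 0) := by
    refine Jperm hPerm _ _ (Equiv.swap a0 a2) ?_ ?_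
    · rw [sum_getD _ (by simp; omega)]; norm_num
    · intro i
      by_cases h0 : i = a0
      · subst h0
        rw [Equiv.swap_apply_left]
        simp [ha0, ha2, Fin.ext_iff, List.getD]
      · by_cases h2 : i = a2
        · subst h2
          rw [Equiv.swap_apply_right]
          simp [ha0, ha2, List.getD]
        · rw [Equiv.swap_apply_of_ne_of_ne h0 h2, if_neg h2, add_zero]
          have hv0 := hval i a0 0 ha0 h0
          have hv2 := hval i a2 2 ha2 h2
          obtain ⟨iv, hi⟩ := i
          simp only [Fin.ext_iff] at hv0 hv2 ⊢
          rcases iv with _|_|_|_|iv <;> simp_all [List.getD]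
  -- equation 1 : n * β2 = 1
  have J0 : JJ P Z (fun i => List.getD [] i.val 0) = 1 := by
    simp [JJ]
  have e1 : (n : ℝ) * JJ P Z (fun i => [1].getD i.val 0) = 1 := by
    have hs := sum_rel (P := P) hmeas hsphere (fun i => List.getD [] i.val 0)
    rw [Finset.sum_congr rfl (fun j _ =>
      bump_beyond hPerm [] (by norm_num) (by simp; omega) j (by simp))] at hs
    rw [Finset.sum_const, Finset.card_univ, Fintype.card_fin, nsmul_eq_mul, J0] at hs
    exact hs
  -- equation 2 : β4 + (n-1) β22 = β2
  have e2 : JJ P Z (fun i => [2].getD i.val 0)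
      + ((n : ℝ) - 1) * JJ P Z (fun i => [1,1].getD i.val 0)
      = JJ P Z (fun i => [1].getD i.val 0) := by
    have hform : ∀ j : Fin n, JJ P Z (fun i => [1].getD i.val 0 + if i = j then 1 else 0)
        = JJ P Z (fun i => [1,1].getD i.val 0)
          + (if j = a0 then JJ P Z (fun i => [2].getD i.val 0)
              - JJ P Z (fun i => [1,1].getD i.val 0) else 0) := by
      intro j
      by_cases h0 : j = a0
      · subst h0
        rw [if_pos rfl, d1]; ring
      · rw [if_neg h0, add_zero]
        exact bump_beyond hPerm [1] (by norm_num) (by simp; omega) j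
          (by have := hval j a0 0 ha0 h0; simp; omega)
    have hs := sum_rel (P := P) hmeas hsphere (fun i => [1].getD i.val 0)
    rw [Finset.sum_congr rfl (fun j _ => hform j)] at hs
    simp only [Finset.sum_add_distrib, Finset.sum_const, Finset.card_univ, Fintype.card_fin,
      nsmul_eq_mul, Finset.sum_ite_eq', Finset.mem_univ, if_true] at hs
    linear_combination hs
  -- equation 3 : 2 β42 + (n-2) β222 = β22
  have e3 : 2 * JJ P Z (fun i => [2,1].getD i.val 0)
      + ((n : ℝ) - 2) * JJ P Z (fun i => [1,1,1].getD i.val 0)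
      = JJ P Z (fun i => [1,1].getD i.val 0) := by
    have hform : ∀ j : Fin n, JJ P Z (fun i => [1,1].getD i.val 0 + if i = j then 1 else 0)
        = JJ P Z (fun i => [1,1,1].getD i.val 0)
          + (if j = a0 then JJ P Z (fun i => [2,1].getD i.val 0)
              - JJ P Z (fun i => [1,1,1].getD i.val 0) else 0)
          + (if j = a1 then JJ P Z (fun i => [2,1].getD i.val 0)
              - JJ P Z (fun i => [1,1,1].getD i.val 0) else 0) := by
      intro j
      by_cases h0 : j = a0
      · subst h0
        rw [if_pos rfl, if_neg (by simp [Fin.ext_iff, ha0, ha1]), d2]; ring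
      · by_cases h1 : j = a1
        · subst h1
          rw [if_neg h0, if_pos rfl, s1]; ring
        · rw [if_neg h0, if_neg h1, add_zero, add_zero]
          exact bump_beyond hPerm [1,1] (by norm_num) (by simp; omega) j
            (by have := hval j a0 0 ha0 h0; have := hval j a1 1 ha1 h1; simp; omega)
    have hs := sum_rel (P := P) hmeas hsphere (fun i => [1,1].getD i.val 0)
    rw [Finset.sum_congr rfl (fun j _ => hform j)] at hs
    simp only [Finset.sum_add_distrib, Finset.sum_const, Finset.card_univ, Fintype.card_fin,
      nsmul_eq_mul, Finset.sum_ite_eq', Finset.mem_univ, if_true] at hs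
    linear_combination hs
  -- equation 4 : β6 + (n-1) β42 = β4
  have e4 : JJ P Z (fun i => [3].getD i.val 0)
      + ((n : ℝ) - 1) * JJ P Z (fun i => [2,1].getD i.val 0)
      = JJ P Z (fun i => [2].getD i.val 0) := by
    have hform : ∀ j : Fin n, JJ P Z (fun i => [2].getD i.val 0 + if i = j then 1 else 0)
        = JJ P Z (fun i => [2,1].getD i.val 0)
          + (if j = a0 then JJ P Z (fun i => [3].getD i.val 0)
              - JJ P Z (fun i => [2,1].getD i.val 0) else 0) := by
      intro j
      by_cases h0 : j = a0
      · subst h0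
        rw [if_pos rfl, d3]; ring
      · rw [if_neg h0, add_zero]
        exact bump_beyond hPerm [2] (by norm_num) (by simp; omega) j
          (by have := hval j a0 0 ha0 h0; simp; omega)
    have hs := sum_rel (P := P) hmeas hsphere (fun i => [2].getD i.val 0)
    rw [Finset.sum_congr rfl (fun j _ => hform j)] at hs
    simp only [Finset.sum_add_distrib, Finset.sum_const, Finset.card_univ, Fintype.card_fin,
      nsmul_eq_mul, Finset.sum_ite_eq', Finset.mem_univ, if_true] at hs
    linear_combination hs
  -- equation 5 : 3 β422 + (n-3) β2222 = β222
  have e5 : 3 * JJ P Z (fun i => [2,1,1].getD i.val 0)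
      + ((n : ℝ) - 3) * JJ P Z (fun i => [1,1,1,1].getD i.val 0)
      = JJ P Z (fun i => [1,1,1].getD i.val 0) := by
    have hform : ∀ j : Fin n, JJ P Z (fun i => [1,1,1].getD i.val 0 + if i = j then 1 else 0)
        = JJ P Z (fun i => [1,1,1,1].getD i.val 0)
          + (if j = a0 then JJ P Z (fun i => [2,1,1].getD i.val 0)
              - JJ P Z (fun i => [1,1,1,1].getD i.val 0) else 0)
          + (if j = a1 then JJ P Z (fun i => [2,1,1].getD i.val 0)
              - JJ P Z (fun i => [1,1,1,1].getD i.val 0) else 0)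
          + (if j = a2 then JJ P Z (fun i => [2,1,1].getD i.val 0)
              - JJ P Z (fun i => [1,1,1,1].getD i.val 0) else 0) := by
      intro j
      by_cases h0 : j = a0
      · subst h0
        rw [if_pos rfl, if_neg (by simp [Fin.ext_iff, ha0, ha1]),
          if_neg (by simp [Fin.ext_iff, ha0, ha2]), d4]; ring
      · by_cases h1 : j = a1
        · subst h1
          rw [if_neg h0, if_pos rfl, if_neg (by simp [Fin.ext_iff, ha1, ha2]), s2]; ring
        · by_cases h2 : j = a2
          · subst h2
            rw [if_neg h0, if_neg h1, if_pos rfl, s3]; ring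
          · rw [if_neg h0, if_neg h1, if_neg h2, add_zero, add_zero, add_zero]
            exact bump_beyond hPerm [1,1,1] (by norm_num) (by simp; omega) j
              (by have := hval j a0 0 ha0 h0; have := hval j a1 1 ha1 h1;
                  have := hval j a2 2 ha2 h2; simp; omega)
    have hs := sum_rel (P := P) hmeas hsphere (fun i => [1,1,1].getD i.val 0)
    rw [Finset.sum_congr rfl (fun j _ => hform j)] at hs
    simp only [Finset.sum_add_distrib, Finset.sum_const, Finset.card_univ, Fintype.card_fin,
      nsmul_eq_mul, Finset.sum_ite_eq', Finset.mem_univ, if_true] at hs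
    linear_combination hs
  -- equation 6 : β62 + β44 + (n-2) β422 = β42
  have e6 : JJ P Z (fun i => [3,1].getD i.val 0) + JJ P Z (fun i => [2,2].getD i.val 0)
      + ((n : ℝ) - 2) * JJ P Z (fun i => [2,1,1].getD i.val 0)
      = JJ P Z (fun i => [2,1].getD i.val 0) := by
    have hform : ∀ j : Fin n, JJ P Z (fun i => [2,1].getD i.val 0 + if i = j then 1 else 0)
        = JJ P Z (fun i => [2,1,1].getD i.val 0)
          + (if j = a0 then JJ P Z (fun i => [3,1].getD i.val 0)
              - JJ P Z (fun i => [2,1,1].getD i.val 0) else 0)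
          + (if j = a1 then JJ P Z (fun i => [2,2].getD i.val 0)
              - JJ P Z (fun i => [2,1,1].getD i.val 0) else 0) := by
      intro j
      by_cases h0 : j = a0
      · subst h0
        rw [if_pos rfl, if_neg (by simp [Fin.ext_iff, ha0, ha1]), d5]; ring
      · by_cases h1 : j = a1
        · subst h1
          rw [if_neg h0, if_pos rfl, d6]; ring
        · rw [if_neg h0, if_neg h1, add_zero, add_zero]
          exact bump_beyond hPerm [2,1] (by norm_num) (by simp; omega) j
            (by have := hval j a0 0 ha0 h0; have := hval j a1 1 ha1 h1; simp; omega)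
    have hs := sum_rel (P := P) hmeas hsphere (fun i => [2,1].getD i.val 0)
    rw [Finset.sum_congr rfl (fun j _ => hform j)] at hs
    simp only [Finset.sum_add_distrib, Finset.sum_const, Finset.card_univ, Fintype.card_fin,
      nsmul_eq_mul, Finset.sum_ite_eq', Finset.mem_univ, if_true] at hs
    linear_combination hs
  -- equation 7 : β8 + (n-1) β62 = β6
  have e7 : JJ P Z (fun i => [4].getD i.val 0)
      + ((n : ℝ) - 1) * JJ P Z (fun i => [3,1].getD i.val 0)
      = JJ P Z (fun i => [3].getD i.val 0) := by
    have hform : ∀ j : Fin n, JJ P Z (fun i => [3].getD i.val 0 + if i = j then 1 else 0)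
        = JJ P Z (fun i => [3,1].getD i.val 0)
          + (if j = a0 then JJ P Z (fun i => [4].getD i.val 0)
              - JJ P Z (fun i => [3,1].getD i.val 0) else 0) := by
      intro j
      by_cases h0 : j = a0
      · subst h0
        rw [if_pos rfl, d7]; ring
      · rw [if_neg h0, add_zero]
        exact bump_beyond hPerm [3] (by norm_num) (by simp; omega) j
          (by have := hval j a0 0 ha0 h0; simp; omega)
    have hs := sum_rel (P := P) hmeas hsphere (fun i => [3].getD i.val 0)
    rw [Finset.sum_congr rfl (fun j _ => hform j)] at hs
    simp only [Finset.sum_add_distrib, Finset.sum_const, Finset.card_univ, Fintype.card_fin,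
      nsmul_eq_mul, Finset.sum_ite_eq', Finset.mem_univ, if_true] at hs
    linear_combination hs
  -- final algebra
  have hNne : (n : ℝ) ≠ 0 := by
    have : (4 : ℝ) ≤ (n : ℝ) := by exact_mod_cast hn
    linarith
  simp only [hmom]
  have g1 : JJ P Z (fun i => [1].getD i.val 0) = 1 / (n : ℝ) := by
    rw [eq_div_iff hNne]
    linear_combination e1
  have g2 : JJ P Z (fun i => [2].getD i.val 0)
      = 1 / (n : ℝ) - ((n : ℝ) - 1) * JJ P Z (fun i => [1,1].getD i.val 0) := by
    linear_combination e2 + g1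
  have g3 : JJ P Z (fun i => [2,1].getD i.val 0)
      = (1 / 2) * JJ P Z (fun i => [1,1].getD i.val 0)
        - ((n : ℝ) - 2) / 2 * JJ P Z (fun i => [1,1,1].getD i.val 0) := by
    linear_combination (1/2 : ℝ) * e3
  have g4 : JJ P Z (fun i => [3].getD i.val 0)
      = 1 / (n : ℝ) - 3 * ((n : ℝ) - 1) / 2 * JJ P Z (fun i => [1,1].getD i.val 0)
        + ((n : ℝ) - 1) * ((n : ℝ) - 2) / 2 * JJ P Z (fun i => [1,1,1].getD i.val 0) := by
    linear_combination e4 - ((n : ℝ) - 1) * g3 + g2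
  have g6 : JJ P Z (fun i => [2,1,1].getD i.val 0)
      = (1 / 3) * JJ P Z (fun i => [1,1,1].getD i.val 0)
        + (3 - (n : ℝ)) / 3 * JJ P Z (fun i => [1,1,1,1].getD i.val 0) := by
    linear_combination (1/3 : ℝ) * e5
  have g5 : JJ P Z (fun i => [3,1].getD i.val 0)
      = (1 / 2) * JJ P Z (fun i => [1,1].getD i.val 0)
        - 5 * ((n : ℝ) - 2) / 6 * JJ P Z (fun i => [1,1,1].getD i.val 0)
        + ((n : ℝ) - 2) * ((n : ℝ) - 3) / 3 * JJ P Z (fun i => [1,1,1,1].getD i.val 0)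
        - JJ P Z (fun i => [2,2].getD i.val 0) := by
    linear_combination e6 - ((n : ℝ) - 2) * g6 + g3
  have g7 : JJ P Z (fun i => [4].getD i.val 0)
      = 1 / (n : ℝ) + 2 * (1 - (n : ℝ)) * JJ P Z (fun i => [1,1].getD i.val 0)
        + (4 * (n : ℝ) ^ 2 / 3 - 4 * (n : ℝ) + 8 / 3) * JJ P Z (fun i => [1,1,1].getD i.val 0)
        + (-(n : ℝ) ^ 3 / 3 + 2 * (n : ℝ) ^ 2 - 11 * (n : ℝ) / 3 + 2)
          * JJ P Z (fun i => [1,1,1,1].getD i.val 0)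
        + ((n : ℝ) - 1) * JJ P Z (fun i => [2,2].getD i.val 0) := by
    linear_combination e7 - ((n : ℝ) - 1) * g5 + g4
  exact ⟨g1, g2, g3, g4, g5, g6, g7⟩
end
end

section
/- Exact fourth moment formula on the unit sphere: Let Z_1, …, Z_n be random variables such that Z_1^2 + ⋯ + Z_n^2 = 1 and, for all positive integers m_1, …, m_r with m_1 + ⋯ + m_r ≤ 4, the mixed moment β_{2m_1,…,2m_r} := E[Z_{i_1}^{2m_1} ⋯ Z_{i_r}^{2m_r}] (for distinct indices) is invariant under permutations of the indices. Then for any real numbers a_1, …, a_n with a_1 + ⋯ + a_n = 1, one has E[(∑_{k=1}^n a_k (n Z_k^2 − 1))^4] = K_{4,4} n^4 β_{4,4} + K_{2,2} n^2 β_{2,2} + K_{2,2,2} n^3 β_{2,2,2} + K_{2,2,2,2} n^4 β_{2,2,2,2} + K, where, with S_j = a_1^j + ⋯ + a_n^j: K_{4,4} = 3S_2^2 − 4S_3 + n S_4; K = 6n S_2 − 4n² S_3 + n³ S_4 − 3; K_{2,2} = −12n S_2 + 8n² S_3 − 2n³ S_4 + 6; K_{2,2,2} = 8n S_2 − 2n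 S_2^2 + (8n(1−2n)/3) S_3 + (2n²(2n−1)/3) S_4 − 4; K_{2,2,2,2} = −2n S_2 + (2n−3) S_2^2 + (4(n²−2n+3)/3) S_3 − (n(n²−2n+3)/3) S_4 + 1. In particular, K + K_{4,4} + K_{2,2} + K_{2,2,2} + K_{2,2,2,2} = 0. -/
open MeasureTheory Filter Finset

noncomputable section

variable {Ω : Type*} [MeasurableSpace Ω]

/-!
Write `x k = Z k ^ 2`, so that `∑ x k = 1`, and `b k = n * a k - 1`, so that `∑ b k = 0` and
`∑ a k * (n * x k - 1) = ∑ b k * x k`. Expanding the fourth power, `E[x k * x l * x m * x p]`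
depends only on which of the four indices coincide, hence is a polynomial in Kronecker deltas;
summed against `b k * b l * b m * b p`, every term in which some index stands alone vanishes,
leaving `3 (β₄₄ - 2 β₄₂₂ + β₂₂₂₂) (∑ b²)² + (β₈ - 4 β₆₂ - 3 β₄₄ + 12 β₄₂₂ - 6 β₂₂₂₂) ∑ b⁴`.
Multiplying a moment by `∑ x j = 1` gives linear relations such as
`β₂₂₂ = 3 β₄₂₂ + (n - 3) β₂₂₂₂`, which eliminate `β₈`, `β₆₂` and `β₄₂₂`.
-/

section General

variable {ι : Type*} [Fintype ι]

def sqMoment (P : Measure Ω) (Z : ι → Ω → ℝ) (m : ι → ℕ) : ℝ :=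
  ∫ ω, ∏ i, Z i ω ^ (2 * m i) ∂P

def SqMomentPermInvariant (P : Measure Ω) (Z : ι → Ω → ℝ) (d : ℕ) : Prop :=
  ∀ (m : ι → ℕ) (σ : Equiv.Perm ι), ∑ i, m i ≤ d → sqMoment P Z m = sqMoment P Z (m ∘ σ)

def kron [DecidableEq ι] (i j : ι) : ℝ := if i = j then 1 else 0

theorem abs_le_one_of_sum_sq_eq_one {x : ι → ℝ} (hx : ∑ i, x i ^ 2 = 1) (i : ι) :
    |x i| ≤ 1 := by
  rw [← sq_le_one_iff_abs_le_one, ← hx]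
  exact single_le_sum (f := fun j => x j ^ 2) (fun j _ => sq_nonneg _) (mem_univ i)

theorem prod_pow_two_mul_add (x : ι → ℝ) (m m' : ι → ℕ) :
    ∏ i, x i ^ (2 * (m + m') i) = (∏ i, x i ^ (2 * m i)) * ∏ i, x i ^ (2 * m' i) := by
  simp [mul_add, pow_add, prod_mul_distrib]

theorem prod_pow_two_mul_single [DecidableEq ι] (x : ι → ℝ) (j : ι) :
    ∏ i, x i ^ (2 * Pi.single j 1 i) = x j ^ 2 := by
  rw [Fintype.prod_eq_single j fun i hi => by simp [hi]]
  simp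

theorem sum_pow_four_eq_sum (f : ι → ℝ) :
    (∑ k, f k) ^ 4 = ∑ k, ∑ l, ∑ m, ∑ p, f k * f l * f m * f p := by
  simp only [← mul_sum, ← sum_mul]
  ring

theorem sum_mul_kron_quartic_of_sum_eq_zero [DecidableEq ι] (b : ι → ℝ) (hb : ∑ i, b i = 0)
    (A B C E F : ℝ) :
    ∑ k, ∑ l, ∑ m, ∑ p, b k * b l * b m * b p *
      (A + B * (kron k l + kron k m + kron k p + kron l m + kron l p + kron m p)
        + C * (kron k l * kron m p + kron k m * kron l p + kron k p * kron l m)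
        + E * (kron k l * kron k m + kron k l * kron k p + kron k m * kron k p
          + kron l m * kron l p)
        + F * (kron k l * kron k m * kron k p)) =
      3 * C * (∑ i, b i ^ 2) ^ 2 + F * ∑ i, b i ^ 4 := by
  simp only [mul_add, sum_add_distrib, kron, mul_ite, mul_one, mul_zero, sum_ite_eq, mem_univ,
    if_true, sum_ite_irrel, sum_const_zero, ← mul_sum, ← sum_mul, hb]
  ring_nf
  simp only [← mul_sum, ← sum_mul, hb, ← mul_assoc, ← sq, mul_zero, zero_mul, sum_const_zero]
  ring

variable {P : Measure Ω} {Z : ι → Ω → ℝ} [IsFiniteMeasure P]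

theorem integrable_prod_pow (hmeas : ∀ i, Measurable (Z i)) (hsphere : ∀ ω, ∑ i, Z i ω ^ 2 = 1)
    (e : ι → ℕ) : Integrable (fun ω => ∏ i, Z i ω ^ e i) P := by
  refine (integrable_const (1 : ℝ)).mono'
    (Finset.measurable_prod _ fun i _ => (hmeas i).pow_const _).aestronglyMeasurable
    (.of_forall fun ω => ?_)
  rw [Real.norm_eq_abs, abs_prod]
  exact prod_le_one (fun i _ => abs_nonneg _) fun i _ => by
    rw [abs_pow]; exact pow_le_one₀ (abs_nonneg _) (abs_le_one_of_sum_sq_eq_one (hsphere ω) i)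

variable [DecidableEq ι]

theorem sqMoment_eq_sum_add_single (hmeas : ∀ i, Measurable (Z i))
    (hsphere : ∀ ω, ∑ i, Z i ω ^ 2 = 1) (m : ι → ℕ) :
    sqMoment P Z m = ∑ j, sqMoment P Z (m + Pi.single j 1) := by
  simp only [sqMoment, prod_pow_two_mul_add, prod_pow_two_mul_single]
  rw [← integral_finsetSum _ fun j _ => ?_]
  · simp [← mul_sum, hsphere]
  · refine (integrable_prod_pow hmeas hsphere fun i => 2 * (m + Pi.single j 1 : ι → ℕ) i).congr
      (.of_forall fun ω => ?_)
    simp only [prod_pow_two_mul_add, prod_pow_two_mul_single]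

theorem integral_sum_mul_sq_pow_four (hmeas : ∀ i, Measurable (Z i))
    (hsphere : ∀ ω, ∑ i, Z i ω ^ 2 = 1) (b : ι → ℝ) :
    ∫ ω, (∑ k, b k * Z k ω ^ 2) ^ 4 ∂P = ∑ k, ∑ l, ∑ m, ∑ p, b k * b l * b m * b p *
      sqMoment P Z (Pi.single k 1 + Pi.single l 1 + Pi.single m 1 + Pi.single p 1) := by
  set e : ι → ι → ι → ι → ι → ℕ := fun k l m p =>
    Pi.single k 1 + Pi.single l 1 + Pi.single m 1 + Pi.single p 1
  have hpt : ∀ ω, (∑ k, b k * Z k ω ^ 2) ^ 4 =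
      ∑ k, ∑ l, ∑ m, ∑ p, b k * b l * b m * b p * ∏ i, Z i ω ^ (2 * e k l m p i) := by
    intro ω
    simp only [e, sum_pow_four_eq_sum, prod_pow_two_mul_add, prod_pow_two_mul_single]
    exact sum_congr rfl fun k _ => sum_congr rfl fun l _ => sum_congr rfl fun m _ =>
      sum_congr rfl fun p _ => by ring
  have hint : ∀ k l m p, Integrable
      (fun ω => b k * b l * b m * b p * ∏ i, Z i ω ^ (2 * e k l m p i)) P :=
    fun k l m p => (integrable_prod_pow hmeas hsphere _).const_mul _
  simp only [hpt, sqMoment]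
  rw [integral_finsetSum _ fun k _ => integrable_finsetSum _ fun l _ =>
    integrable_finsetSum _ fun m _ => integrable_finsetSum _ fun p _ => hint k l m p]
  refine sum_congr rfl fun k _ => ?_
  rw [integral_finsetSum _ fun l _ => integrable_finsetSum _ fun m _ =>
    integrable_finsetSum _ fun p _ => hint k l m p]
  refine sum_congr rfl fun l _ => ?_
  rw [integral_finsetSum _ fun m _ => integrable_finsetSum _ fun p _ => hint k l m p]
  refine sum_congr rfl fun m _ => ?_
  rw [integral_finsetSum _ fun p _ => hint k l m p]
  exact sum_congr rfl fun p _ => integral_const_mul _ _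

end General

section Invariance

variable {ι : Type*} [Fintype ι] [DecidableEq ι] {P : Measure Ω} {Z : ι → Ω → ℝ} {d : ℕ}

theorem SqMomentPermInvariant.sqMoment_sum_single_eq (hinv : SqMomentPermInvariant P Z d)
    {α : Type*} [Fintype α] (w : α → ℕ) (hw : ∑ t, w t ≤ d) {f g : α → ι}
    (hf : Function.Injective f) (hg : Function.Injective g) :
    sqMoment P Z (∑ t, Pi.single (f t) (w t)) = sqMoment P Z (∑ t, Pi.single (g t) (w t)) := by
  obtain ⟨σ, hσ⟩ := Equiv.Perm.exists_extending_pair f g hf hg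
  have hcomp : (∑ t, Pi.single (g t) (w t)) ∘ σ = ∑ t, Pi.single (f t) (w t) := by
    ext i
    simp only [Function.comp_apply, Finset.sum_apply, Pi.single_apply, ← hσ, σ.apply_eq_iff_eq]
  rw [← hcomp, ← hinv _ σ]
  simpa [Finset.sum_apply, Pi.single_apply, Finset.sum_comm (γ := ι)] using hw

theorem SqMomentPermInvariant.sqMoment_add_single_eq (hinv : SqMomentPermInvariant P Z d)
    {m : ι → ℕ} (hm : ∑ i, m i < d) {j o : ι} (hj : m j = 0) (ho : m o = 0) :
    sqMoment P Z (m + Pi.single j 1) = sqMoment P Z (m + Pi.single o 1) := by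
  have hcomp : (m + Pi.single o 1) ∘ Equiv.swap j o = m + Pi.single j 1 := by
    ext i
    rcases eq_or_ne i j with rfl | hij
    · simp [hj, ho]
    rcases eq_or_ne i o with rfl | hio
    · simp [hj, ho, hij]
    · simp [Equiv.swap_apply_of_ne_of_ne hij hio, hij, hio]
  rw [← hcomp, ← hinv]
  simp [sum_add_distrib]
  omega

end Invariance

theorem List.getD_modify_add_one (c : List ℕ) {t : ℕ} (ht : t < c.length) (i : ℕ) :
    (c.modify t (· + 1)).getD i 0 = c.getD i 0 + if i = t then 1 else 0 := by
  rw [List.getD_eq_getElem?_getD, List.getD_eq_getElem?_getD, List.getElem?_modify]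
  rcases lt_or_ge i c.length with h | h
  · rw [List.getElem?_eq_getElem h]
    by_cases hit : i = t <;> simp [hit, Ne.symm]
  · rw [List.getElem?_eq_none h]
    simp
    omega

theorem List.getD_append_one (c : List ℕ) (i : ℕ) :
    (c ++ [1]).getD i 0 = c.getD i 0 + if i = c.length then 1 else 0 := by
  rcases lt_or_ge i c.length with h | h
  · rw [List.getD_append _ _ _ _ h, if_neg h.ne, add_zero]
  · rw [List.getD_append_right _ _ _ _ h, List.getD_eq_default _ _ h]
    rcases eq_or_ne i c.length with rfl | h'
    · simp
    · rw [List.getD_eq_default _ _ (by simp; omega), if_neg h']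

section Mom

variable {n d : ℕ} {P : Measure Ω} {Z : Fin n → Ω → ℝ}

theorem mom_eq_sqMoment_getD (c : List ℕ) : mom P Z c = sqMoment P Z (fun i => c.getD i 0) := rfl

theorem mom_nil [IsProbabilityMeasure P] : mom P Z [] = 1 := by
  simp [mom]

-- Multiply by `∑ j, Z j ^ 2 = 1`: every coordinate beyond the list yields the moment of `c ++ [1]`.
theorem SqMomentPermInvariant.mom_eq_sum_modify_add [IsFiniteMeasure P]
    (hinv : SqMomentPermInvariant P Z d) (hmeas : ∀ i, Measurable (Z i))
    (hsphere : ∀ ω, ∑ i, Z i ω ^ 2 = 1) (c : List ℕ) (hlen : c.length < n) (hsum : c.sum < d) :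
    mom P Z c = ∑ t : Fin c.length, mom P Z (c.modify t (· + 1))
      + (n - c.length : ℝ) * mom P Z (c ++ [1]) := by
  obtain ⟨k, rfl⟩ : ∃ k, n = c.length + k := ⟨n - c.length, by omega⟩
  set m : Fin (c.length + k) → ℕ := fun i => c.getD i 0
  have hm : ∑ i, m i < d := by
    simpa [m, Fin.sum_univ_add, List.getD_eq_getElem, List.getD_eq_default, Fin.sum_univ_getElem]
      using hsum
  have hout : ∀ u : Fin k,
      sqMoment P Z (m + Pi.single (Fin.natAdd c.length u) 1) = mom P Z (c ++ [1]) := by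
    intro u
    rw [hinv.sqMoment_add_single_eq hm (o := ⟨c.length, by omega⟩)
      (List.getD_eq_default _ _ (by simp)) (List.getD_eq_default _ _ le_rfl)]
    congr 1
    ext i
    simp only [m, Pi.add_apply, Pi.single_apply, Fin.ext_iff, List.getD_append_one]
  rw [show mom P Z c = sqMoment P Z m from rfl, sqMoment_eq_sum_add_single hmeas hsphere,
    Fin.sum_univ_add]
  simp only [hout]
  congr 1
  · refine sum_congr rfl fun t _ => congrArg _ (funext fun i => ?_)
    simp only [m, Pi.add_apply, Pi.single_apply, Fin.ext_iff, List.getD_modify_add_one _ t.isLt]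
    rw [Fin.val_castAdd]
  · simp

theorem SqMomentPermInvariant.mom_eq_sqMoment_sum_single (hinv : SqMomentPermInvariant P Z d)
    (c : List ℕ) (hc : c.sum ≤ d) {f : Fin c.length → Fin n} (hf : (List.ofFn f).Nodup) :
    mom P Z c = sqMoment P Z (∑ t, Pi.single (f t) (c.get t)) := by
  rw [List.nodup_ofFn] at hf
  have hlen : c.length ≤ n := by simpa using Fintype.card_le_of_injective f hf
  have hexp : (fun i : Fin n => c.getD i 0) = ∑ t, Pi.single (Fin.castLE hlen t) (c.get t) := by
    ext i
    rw [Finset.sum_apply]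
    rcases lt_or_ge i.val c.length with h | h
    · rw [List.getD_eq_getElem _ _ h, Fintype.sum_eq_single ⟨i, h⟩ fun t ht => ?_]
      · simp
      · simp only [ne_eq, Fin.ext_iff] at ht
        simp [Pi.single_apply, Fin.ext_iff]
        omega
    · rw [List.getD_eq_default _ _ h, eq_comm]
      exact sum_eq_zero fun t _ => by simp [Pi.single_apply, Fin.ext_iff]; omega
  rw [mom_eq_sqMoment_getD, hexp]
  exact hinv.sqMoment_sum_single_eq c.get (by simpa using hc) (Fin.castLE_injective hlen) hf

theorem SqMomentPermInvariant.sqMoment_eq_mom (hinv : SqMomentPermInvariant P Z d)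
    (c : List ℕ) (f : Fin c.length → Fin n) (hc : c.sum ≤ d) (hf : (List.ofFn f).Nodup)
    {m : Fin n → ℕ} (hm : m = ∑ t, Pi.single (f t) (c.get t)) : sqMoment P Z m = mom P Z c := by
  rw [hm, hinv.mom_eq_sqMoment_sum_single c hc hf]

theorem SqMomentPermInvariant.mom_eq_mom_of_sum_single_eq (hinv : SqMomentPermInvariant P Z d)
    {c c' : List ℕ} (f : Fin c.length → Fin n) (f' : Fin c'.length → Fin n) (hc : c.sum ≤ d)
    (hc' : c'.sum ≤ d) (hf : (List.ofFn f).Nodup) (hf' : (List.ofFn f').Nodup)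
    (h : ∑ t, Pi.single (f t) (c.get t) = (∑ t, Pi.single (f' t) (c'.get t) : Fin n → ℕ)) :
    mom P Z c = mom P Z c' := by
  rw [hinv.mom_eq_sqMoment_sum_single c hc hf, hinv.mom_eq_sqMoment_sum_single c' hc' hf', h]

-- One case for each set partition of the four indices.
theorem SqMomentPermInvariant.sqMoment_single_add_single_add_single_add_single
    (hinv : SqMomentPermInvariant P Z 4) (k l m p : Fin n) :
    sqMoment P Z (Pi.single k 1 + Pi.single l 1 + Pi.single m 1 + Pi.single p 1) =
      mom P Z [1, 1, 1, 1]
      + (mom P Z [2, 1, 1] - mom P Z [1, 1, 1, 1])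
        * (kron k l + kron k m + kron k p + kron l m + kron l p + kron m p)
      + (mom P Z [2, 2] - 2 * mom P Z [2, 1, 1] + mom P Z [1, 1, 1, 1])
        * (kron k l * kron m p + kron k m * kron l p + kron k p * kron l m)
      + (mom P Z [3, 1] - 3 * mom P Z [2, 1, 1] + 2 * mom P Z [1, 1, 1, 1])
        * (kron k l * kron k m + kron k l * kron k p + kron k m * kron k p
          + kron l m * kron l p)
      + (mom P Z [4] - 4 * mom P Z [3, 1] - 3 * mom P Z [2, 2] + 12 * mom P Z [2, 1, 1]
          - 6 * mom P Z [1, 1, 1, 1]) * (kron k l * kron k m * kron k p) := by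
  rcases eq_or_ne k l with rfl | hkl
  · rcases eq_or_ne k m with rfl | hkm
    · rcases eq_or_ne k p with rfl | hkp
      · rw [hinv.sqMoment_eq_mom [4] ![k] (by norm_num) (by simp)]
        · simp [kron]; ring
        · ext i; simp [Pi.single_apply]; split_ifs <;> simp_all
      · rw [hinv.sqMoment_eq_mom [3, 1] ![k, p] (by norm_num) (by simp [*, Ne.symm])]
        · simp [kron, *, Ne.symm]; ring
        · ext i; simp [Fin.sum_univ_succ, Pi.single_apply]; split_ifs <;> simp_all
    · rcases eq_or_ne k p with rfl | hkp
      · rw [hinv.sqMoment_eq_mom [3, 1] ![k, m] (by norm_num) (by simp [*, Ne.symm])]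
        · simp [kron, *, Ne.symm]; ring
        · ext i; simp [Fin.sum_univ_succ, Pi.single_apply]; split_ifs <;> simp_all
      · rcases eq_or_ne m p with rfl | hmp
        · rw [hinv.sqMoment_eq_mom [2, 2] ![k, m] (by norm_num) (by simp [*, Ne.symm])]
          · simp [kron, *, Ne.symm]; ring
          · ext i; simp [Fin.sum_univ_succ, Pi.single_apply]; split_ifs <;> simp_all
        · rw [hinv.sqMoment_eq_mom [2, 1, 1] ![k, m, p] (by norm_num) (by simp [*, Ne.symm])]
          · simp [kron, *, Ne.symm]
          · ext i; simp [Fin.sum_univ_succ, Pi.single_apply]; split_ifs <;> simp_all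
  · rcases eq_or_ne k m with rfl | hkm
    · rcases eq_or_ne k p with rfl | hkp
      · rw [hinv.sqMoment_eq_mom [3, 1] ![k, l] (by norm_num) (by simp [*, Ne.symm])]
        · simp [kron, *, Ne.symm]; ring
        · ext i; simp [Fin.sum_univ_succ, Pi.single_apply]; split_ifs <;> simp_all
      · rcases eq_or_ne l p with rfl | hlp
        · rw [hinv.sqMoment_eq_mom [2, 2] ![k, l] (by norm_num) (by simp [*, Ne.symm])]
          · simp [kron, *, Ne.symm]; ring
          · ext i; simp [Fin.sum_univ_succ, Pi.single_apply]; split_ifs <;> simp_all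
        · rw [hinv.sqMoment_eq_mom [2, 1, 1] ![k, l, p] (by norm_num) (by simp [*, Ne.symm])]
          · simp [kron, *, Ne.symm]
          · ext i; simp [Fin.sum_univ_succ, Pi.single_apply]; split_ifs <;> simp_all
    · rcases eq_or_ne k p with rfl | hkp
      · rcases eq_or_ne l m with rfl | hlm
        · rw [hinv.sqMoment_eq_mom [2, 2] ![k, l] (by norm_num) (by simp [*, Ne.symm])]
          · simp [kron, *, Ne.symm]; ring
          · ext i; simp [Fin.sum_univ_succ, Pi.single_apply]; split_ifs <;> simp_all
        · rw [hinv.sqMoment_eq_mom [2, 1, 1] ![k, l, m] (by norm_num) (by simp [*, Ne.symm])]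
          · simp [kron, *, Ne.symm]
          · ext i; simp [Fin.sum_univ_succ, Pi.single_apply]; split_ifs <;> simp_all
      · rcases eq_or_ne l m with rfl | hlm
        · rcases eq_or_ne l p with rfl | hlp
          · rw [hinv.sqMoment_eq_mom [3, 1] ![l, k] (by norm_num) (by simp [*, Ne.symm])]
            · simp [kron, *, Ne.symm]; ring
            · ext i; simp [Fin.sum_univ_succ, Pi.single_apply]; split_ifs <;> simp_all
          · rw [hinv.sqMoment_eq_mom [2, 1, 1] ![l, k, p] (by norm_num) (by simp [*, Ne.symm])]
            · simp [kron, *, Ne.symm]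
            · ext i; simp [Fin.sum_univ_succ, Pi.single_apply]; split_ifs <;> simp_all
        · rcases eq_or_ne l p with rfl | hlp
          · rw [hinv.sqMoment_eq_mom [2, 1, 1] ![l, k, m] (by norm_num) (by simp [*, Ne.symm])]
            · simp [kron, *, Ne.symm]
            · ext i; simp [Fin.sum_univ_succ, Pi.single_apply]; split_ifs <;> simp_all
          · rcases eq_or_ne m p with rfl | hmp
            · rw [hinv.sqMoment_eq_mom [2, 1, 1] ![m, k, l] (by norm_num) (by simp [*, Ne.symm])]
              · simp [kron, *, Ne.symm]
              · ext i; simp [Fin.sum_univ_succ, Pi.single_apply]; split_ifs <;> simp_all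
            · rw [hinv.sqMoment_eq_mom [1, 1, 1, 1] ![k, l, m, p] (by norm_num)
                (by simp [*, Ne.symm])]
              · simp [kron, *, Ne.symm]
              · ext i; simp [Fin.sum_univ_succ, Pi.single_apply]; split_ifs <;> simp_all

theorem SqMomentPermInvariant.integral_sum_mul_sq_pow_four_of_sum_eq_zero [IsFiniteMeasure P]
    (hinv : SqMomentPermInvariant P Z 4) (hmeas : ∀ i, Measurable (Z i))
    (hsphere : ∀ ω, ∑ i, Z i ω ^ 2 = 1) (b : Fin n → ℝ) (hb : ∑ i, b i = 0) :
    ∫ ω, (∑ k, b k * Z k ω ^ 2) ^ 4 ∂P =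
      3 * (mom P Z [2, 2] - 2 * mom P Z [2, 1, 1] + mom P Z [1, 1, 1, 1]) * (∑ i, b i ^ 2) ^ 2
      + (mom P Z [4] - 4 * mom P Z [3, 1] - 3 * mom P Z [2, 2] + 12 * mom P Z [2, 1, 1]
          - 6 * mom P Z [1, 1, 1, 1]) * ∑ i, b i ^ 4 := by
  rw [integral_sum_mul_sq_pow_four hmeas hsphere]
  simp only [hinv.sqMoment_single_add_single_add_single_add_single]
  exact sum_mul_kron_quartic_of_sum_eq_zero b hb _ _ _ _ _

section Relations

variable [IsProbabilityMeasure P] (hinv : SqMomentPermInvariant P Z 4)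
  (hmeas : ∀ i, Measurable (Z i)) (hsphere : ∀ ω, ∑ i, Z i ω ^ 2 = 1)
include hinv hmeas hsphere

theorem SqMomentPermInvariant.three_mul_mom_two_one_one (hn : 4 ≤ n) :
    3 * mom P Z [2, 1, 1] = mom P Z [1, 1, 1] - (n - 3) * mom P Z [1, 1, 1, 1] := by
  let i : Fin 3 → Fin n := Fin.castLE (by omega)
  have h121 : mom P Z [1, 2, 1] = mom P Z [2, 1, 1] :=
    hinv.mom_eq_mom_of_sum_single_eq ![i 1, i 0, i 2] ![i 0, i 1, i 2] (by norm_num)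
      (by norm_num) (by simp [i]) (by simp [i]) (by simp [Fin.sum_univ_succ]; abel)
  have h112 : mom P Z [1, 1, 2] = mom P Z [2, 1, 1] :=
    hinv.mom_eq_mom_of_sum_single_eq ![i 1, i 2, i 0] ![i 0, i 1, i 2] (by norm_num)
      (by norm_num) (by simp [i]) (by simp [i]) (by simp [Fin.sum_univ_succ]; abel)
  have r := hinv.mom_eq_sum_modify_add hmeas hsphere [1, 1, 1] (by simp; omega) (by simp)
  simp [Fin.sum_univ_succ, h121, h112] at r
  linear_combination -r

theorem SqMomentPermInvariant.mul_mom_four_sub (hn : 4 ≤ n) :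
    n * (mom P Z [4] - 4 * mom P Z [3, 1] - 3 * mom P Z [2, 2] + 12 * mom P Z [2, 1, 1]
        - 6 * mom P Z [1, 1, 1, 1]) =
      n ^ 2 * mom P Z [2, 2] - 2 * n ^ 2 * mom P Z [1, 1]
        + 2 * n ^ 2 * (2 * n - 1) / 3 * mom P Z [1, 1, 1]
        - n ^ 2 * (n ^ 2 - 2 * n + 3) / 3 * mom P Z [1, 1, 1, 1] + 1 := by
  let i : Fin 2 → Fin n := Fin.castLE (by omega)
  have h12 : mom P Z [1, 2] = mom P Z [2, 1] :=
    hinv.mom_eq_mom_of_sum_single_eq ![i 1, i 0] ![i 0, i 1] (by norm_num) (by norm_num)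
      (by simp [i]) (by simp [i]) (by simp [Fin.sum_univ_succ]; abel)
  have r0 := hinv.mom_eq_sum_modify_add hmeas hsphere [] (by simp; omega) (by simp)
  have r1 := hinv.mom_eq_sum_modify_add hmeas hsphere [1] (by simp; omega) (by simp)
  have r2 := hinv.mom_eq_sum_modify_add hmeas hsphere [2] (by simp; omega) (by simp)
  have r3 := hinv.mom_eq_sum_modify_add hmeas hsphere [3] (by simp; omega) (by simp)
  have r4 := hinv.mom_eq_sum_modify_add hmeas hsphere [1, 1] (by simp; omega) (by simp)
  have r5 := hinv.mom_eq_sum_modify_add hmeas hsphere [2, 1] (by simp; omega) (by simp)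
  simp [Fin.sum_univ_succ, mom_nil, h12] at r0 r1 r2 r3 r4 r5
  -- Eliminate `β₈, β₆, β₄, β₂` along `r3, r2, r1, r0`, then `β₆₂, β₄₂, β₄₂₂`.
  linear_combination (-1 : ℝ) * r0 - n * r1 - n * r2 - n * r3 + n * (n + 1) * r4
    + n * (n + 3) * r5
    + (12 * n + n * (n - 2) * (n + 3)) / 3 * hinv.three_mul_mom_two_one_one hmeas hsphere hn

end Relations

theorem sum_mul_sub_one_sq (a : Fin n → ℝ) (ha : ∑ i, a i = 1) (c : ℝ) :
    ∑ i, (c * a i - 1) ^ 2 = c ^ 2 * Spow a 2 - 2 * c + n := by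
  have h : ∀ i, (c * a i - 1) ^ 2 = c ^ 2 * a i ^ 2 - 2 * c * a i + 1 := fun i => by ring
  simp [h, Spow, sum_add_distrib, sum_sub_distrib, ← mul_sum, ha]

theorem sum_mul_sub_one_pow_four (a : Fin n → ℝ) (ha : ∑ i, a i = 1) (c : ℝ) :
    ∑ i, (c * a i - 1) ^ 4 =
      c ^ 4 * Spow a 4 - 4 * c ^ 3 * Spow a 3 + 6 * c ^ 2 * Spow a 2 - 4 * c + n := by
  have h : ∀ i, (c * a i - 1) ^ 4 =
      c ^ 4 * a i ^ 4 - 4 * c ^ 3 * a i ^ 3 + 6 * c ^ 2 * a i ^ 2 - 4 * c * a i + 1 :=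
    fun i => by ring
  simp [h, Spow, sum_add_distrib, sum_sub_distrib, ← mul_sum, ha]

end Mom

/-- Exact fourth moment formula on the unit sphere, together with the identity
`K + K_{4,4} + K_{2,2} + K_{2,2,2} + K_{2,2,2,2} = 0`. -/
theorem fourth_moment_unit_sphere
    (P : Measure Ω) [IsProbabilityMeasure P]
    (n : ℕ) (hn : 4 ≤ n) (Z : Fin n → Ω → ℝ)
    (hmeas : ∀ i, Measurable (Z i))
    (hsphere : ∀ ω, ∑ i, (Z i ω) ^ 2 = 1)
    (hPerm : ∀ (m : Fin n → ℕ) (σ : Equiv.Perm (Fin n)), (∑ i, m i) ≤ 4 →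
      ∫ ω, ∏ i, Z i ω ^ (2 * m i) ∂P = ∫ ω, ∏ i, Z i ω ^ (2 * m (σ i)) ∂P)
    (a : Fin n → ℝ) (ha : ∑ i, a i = 1) :
    ∀ K44 KK K22 K222 K2222 : ℝ,
      K44 = 3 * (Spow a 2) ^ 2 - 4 * Spow a 3 + (n : ℝ) * Spow a 4 →
      KK = 6 * (n : ℝ) * Spow a 2 - 4 * (n : ℝ) ^ 2 * Spow a 3 + (n : ℝ) ^ 3 * Spow a 4 - 3 →
      K22 = -12 * (n : ℝ) * Spow a 2 + 8 * (n : ℝ) ^ 2 * Spow a 3 -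
          2 * (n : ℝ) ^ 3 * Spow a 4 + 6 →
      K222 = 8 * (n : ℝ) * Spow a 2 - 2 * (n : ℝ) * (Spow a 2) ^ 2 +
          8 * (n : ℝ) * (1 - 2 * (n : ℝ)) / 3 * Spow a 3 +
          2 * (n : ℝ) ^ 2 * (2 * (n : ℝ) - 1) / 3 * Spow a 4 - 4 →
      K2222 = -2 * (n : ℝ) * Spow a 2 + (2 * (n : ℝ) - 3) * (Spow a 2) ^ 2 +
          4 * ((n : ℝ) ^ 2 - 2 * (n : ℝ) + 3) / 3 * Spow a 3 -
          (n : ℝ) * ((n : ℝ) ^ 2 - 2 * (n : ℝ) + 3) / 3 * Spow a 4 + 1 →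
      (∫ ω, (∑ k, a k * ((n : ℝ) * (Z k ω) ^ 2 - 1)) ^ 4 ∂P =
          K44 * (n : ℝ) ^ 4 * mom P Z [2, 2] + K22 * (n : ℝ) ^ 2 * mom P Z [1, 1] +
          K222 * (n : ℝ) ^ 3 * mom P Z [1, 1, 1] +
          K2222 * (n : ℝ) ^ 4 * mom P Z [1, 1, 1, 1] + KK) ∧
        KK + K44 + K22 + K222 + K2222 = 0 := by
  rintro _ _ _ _ _ rfl rfl rfl rfl rfl
  refine ⟨?_, by ring⟩
  have hinv : SqMomentPermInvariant P Z 4 := hPerm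
  have hb : ∑ k, ((n : ℝ) * a k - 1) = 0 := by simp [sum_sub_distrib, ← mul_sum, ha]
  have hsum : ∀ ω, ∑ k, a k * ((n : ℝ) * Z k ω ^ 2 - 1) = ∑ k, ((n : ℝ) * a k - 1) * Z k ω ^ 2 := by
    intro ω
    simp only [mul_sub, sub_mul, mul_one, one_mul, sum_sub_distrib, hsphere, ha]
    exact congrArg (· - 1) (sum_congr rfl fun k _ => by ring)
  simp_rw [hsum]
  rw [hinv.integral_sum_mul_sq_pow_four_of_sum_eq_zero hmeas hsphere _ hb,
    sum_mul_sub_one_sq a ha, sum_mul_sub_one_pow_four a ha]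
  -- `∑ (n aₖ - 1)⁴ = n (n³ S₄ - 4 n² S₃ + 6 n S₂ - 3)` absorbs the factor `n` of
  -- `mul_mom_four_sub`.
  linear_combination
    (-2 * ((n : ℝ) ^ 2 * Spow a 2 - n) ^ 2) * hinv.three_mul_mom_two_one_one hmeas hsphere hn
    + ((n : ℝ) ^ 3 * Spow a 4 - 4 * (n : ℝ) ^ 2 * Spow a 3 + 6 * n * Spow a 2 - 3)
      * hinv.mul_mom_four_sub hmeas hsphere hn
end
end

section
/- Exact second moments of the diagonal and off-diagonal parts: Assume the distribution of X_{11} is symmetric (X_{11} has the same distribution as −X_{11}) and non-degenerate with P(X_{11} = 0) = 0. Then for every 0 ≤ i ≤ p−1: E[U_{i+1}^2] = ((1 − n E[S_2^{(i)}])/(n−1)) (1 − n² β_4), and E[V_{i+1}^2] = 2 n² β_{2,2} (1/(n−i) − E[S_2^{(i)}]). -/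
open MeasureTheory ProbabilityTheory Filter Finset Matrix

noncomputable section

variable {Ω : Type*}

/-- The Euclidean norm of the first `n` entries of row `i` of the array `X`. -/
def rowNorm (X : ℕ → ℕ → Ω → ℝ) (n i : ℕ) (ω : Ω) : ℝ :=
  Real.sqrt (∑ j ∈ Finset.range n, (X i j ω) ^ 2)

/-- The self-normalized entries `Y_{ij} = X_{ij} / sqrt(X_{i1}² + ⋯ + X_{in}²)`. -/
def Ynorm (X : ℕ → ℕ → Ω → ℝ) (n i j : ℕ) (ω : Ω) : ℝ :=
  X i j ω / rowNorm X n i ω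

/-- `B_{(i)}`: the `i × n` matrix whose rows are the first `i` rows of `X`. -/
def Bmat (X : ℕ → ℕ → Ω → ℝ) (n i : ℕ) (ω : Ω) : Matrix (Fin i) (Fin n) ℝ :=
  Matrix.of fun a b => X a.val b.val ω

/-- The projection `P_i = I_n − B_{(i)}ᵀ (B_{(i)} B_{(i)}ᵀ)⁻¹ B_{(i)}` (so `P_0 = I_n`). -/
def Pmat (X : ℕ → ℕ → Ω → ℝ) (n i : ℕ) (ω : Ω) : Matrix (Fin n) (Fin n) ℝ :=
  1 - (Bmat X n i ω)ᵀ * (Bmat X n i ω * (Bmat X n i ω)ᵀ)⁻¹ * Bmat X n i ω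

/-- `Q_i = P_i / (n − i)`. -/
def qmat (X : ℕ → ℕ → Ω → ℝ) (n i : ℕ) (ω : Ω) : Matrix (Fin n) (Fin n) ℝ :=
  ((n : ℝ) - (i : ℝ))⁻¹ • Pmat X n i ω

/-- The diagonal part `U_{i+1} = ∑_j q_{i,jj} (n Y_{i+1,j}² − 1)` (rows indexed from 0, so the
row used here is row `i`, which is independent of the first `i` rows). -/
def Udiag (X : ℕ → ℕ → Ω → ℝ) (n i : ℕ) (ω : Ω) : ℝ :=
  ∑ j : Fin n, qmat X n i ω j j * ((n : ℝ) * (Ynorm X n i j.val ω) ^ 2 - 1)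

/-- The off-diagonal part `V_{i+1} = ∑_{k≠l} q_{i,kl} · n Y_{i+1,k} Y_{i+1,l}`. -/
def Voff (X : ℕ → ℕ → Ω → ℝ) (n i : ℕ) (ω : Ω) : ℝ :=
  ∑ k : Fin n, ∑ l : Fin n,
    if k ≠ l then qmat X n i ω k l * ((n : ℝ) * Ynorm X n i k.val ω * Ynorm X n i l.val ω)
    else 0

/-- `Z̃_{i+1} = (n b̃_{i+1}ᵀ P_i b̃_{i+1} − (n − i)) / (n − i)` where `b̃_{i+1}` is the
self-normalized row `i` (0-based). -/
def Ztil (X : ℕ → ℕ → Ω → ℝ) (n i : ℕ) (ω : Ω) : ℝ :=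
  ((n : ℝ) * ∑ k : Fin n, ∑ l : Fin n,
      Ynorm X n i k.val ω * Pmat X n i ω k l * Ynorm X n i l.val ω - ((n : ℝ) - (i : ℝ))) /
    ((n : ℝ) - (i : ℝ))

/-- `L : (0,∞) → (0,∞)` is slowly varying at infinity. -/
def SlowlyVarying (L : ℝ → ℝ) : Prop :=
  (∀ x > 0, 0 < L x) ∧ ∀ t > 0, Tendsto (fun x => L (t * x) / L x) atTop (nhds 1)

/-- σ-algebra generated by the first `i` rows (of length `n`) of `X`. -/
def rowSigma (X : ℕ → ℕ → Ω → ℝ) (n i : ℕ) : MeasurableSpace Ω :=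
  ⨆ ab : Fin i × Fin n, MeasurableSpace.comap (fun ω => X ab.1.val ab.2.val ω) inferInstance

/-!
Write `y` for the self-normalized row `i` and `Q = Q_i`. Since `Q` is built from the first `i`
rows and `y` from row `i`, independence and Fubini reduce both second moments to integrals over
`y` with `Q` frozen. The law of `y` is invariant under permutations of the coordinates and under
flipping the sign of one coordinate, so a degree-four moment of `y` vanishes unless every index
occurs an even number of times, and the surviving ones reduce to `β₄` and `β₂,₂`. Since
`∑ⱼ yⱼ² = 1`, these satisfy `n β₄ + n (n - 1) β₂,₂ = 1`. Finally, `(n - i) Q` is an orthogonal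
projection of rank `n - i`, so `tr Q = 1` and `∑ₖₗ Q_kl² = 1 / (n - i)`.
-/

lemma MeasureTheory.MeasurePreserving.integral_comp_of_aestronglyMeasurable {α : Type*}
    [MeasurableSpace α] {μ : Measure α} {f : α → α} (hf : MeasurePreserving f μ μ) {g : α → ℝ}
    (hg : AEStronglyMeasurable g μ) : ∫ x, g (f x) ∂μ = ∫ x, g x ∂μ := by
  conv_rhs => rw [← hf.map_eq]
  exact (integral_map hf.measurable.aemeasurable (by rwa [hf.map_eq])).symm

lemma Continuous.integrable_comp_of_ae_mem_compact {α E : Type*} [MeasurableSpace α]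
    {μ : Measure α} [IsFiniteMeasure μ] [TopologicalSpace E] [MeasurableSpace E]
    [OpensMeasurableSpace E] {g : E → ℝ} (hg : Continuous g) {φ : α → E}
    (hφ : AEMeasurable φ μ) {K : Set E} (hK : IsCompact K) (hφK : ∀ᵐ x ∂μ, φ x ∈ K) :
    Integrable (fun x => g (φ x)) μ := by
  obtain ⟨C, hC⟩ := hK.exists_bound_of_continuousOn hg.continuousOn
  exact .of_bound (hg.measurable.comp_aemeasurable hφ).aestronglyMeasurable C
    (hφK.mono fun x hx => hC _ hx)

theorem ProbabilityTheory.IndepFun.integral_comp_eq_integral_integral_map {β γ : Type*}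
    [MeasurableSpace Ω] [MeasurableSpace β] [MeasurableSpace γ] {P : Measure Ω}
    [IsFiniteMeasure P] {f : Ω → β} {g : Ω → γ} (hfg : IndepFun f g P) (hf : Measurable f)
    (hg : Measurable g) {F : β × γ → ℝ} (hF : Measurable F)
    (hint : Integrable (fun ω => F (f ω, g ω)) P) :
    ∫ ω, F (f ω, g ω) ∂P = ∫ ω, ∫ z, F (f ω, z) ∂(P.map g) ∂P := by
  have hfg' : Measurable fun ω => (f ω, g ω) := hf.prodMk hg
  have hmap := (indepFun_iff_map_prod_eq_prod_map_map hf.aemeasurable hg.aemeasurable).mp hfg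
  have hFint : Integrable F ((P.map f).prod (P.map g)) := by
    rw [← hmap]
    exact (integrable_map_measure hF.aestronglyMeasurable hfg'.aemeasurable).mpr hint
  rw [← integral_map hfg'.aemeasurable hF.aestronglyMeasurable, hmap, integral_prod F hFint,
    integral_map hf.aemeasurable hFint.integral_prod_left.aestronglyMeasurable]

lemma integral_sq_sum_mul {α κ : Type*} [MeasurableSpace α] {ν : Measure α} (s : Finset κ)
    (a : κ → ℝ) {Z : κ → α → ℝ} (hZ : ∀ j ∈ s, ∀ k ∈ s, Integrable (fun x => Z j x * Z k x) ν) :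
    ∫ x, (∑ j ∈ s, a j * Z j x) ^ 2 ∂ν =
      ∑ j ∈ s, ∑ k ∈ s, a j * a k * ∫ x, Z j x * Z k x ∂ν := by
  have hint (j) (hj : j ∈ s) (k) (hk : k ∈ s) :
      Integrable (fun x => a j * Z j x * (a k * Z k x)) ν :=
    ((hZ j hj k hk).const_mul (a j * a k)).congr (ae_of_all _ fun x => by ring)
  simp_rw [sq, sum_mul_sum]
  rw [integral_finsetSum _ fun j hj => integrable_finsetSum _ fun k hk => hint j hj k hk]
  refine sum_congr rfl fun j hj => ?_
  rw [integral_finsetSum _ fun k hk => hint j hj k hk]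
  refine sum_congr rfl fun k _ => ?_
  rw [← integral_const_mul]
  congr 1 with x
  ring

lemma Finset.sum_sum_mul_mul_ite_eq {ι : Type*} [Fintype ι] [DecidableEq ι] (f : ι → ℝ)
    (c d : ℝ) : ∑ a, ∑ b, f a * f b * (if a = b then c else d) =
      d * (∑ a, f a) ^ 2 + (c - d) * ∑ a, f a ^ 2 := by
  have h (a b : ι) : f a * f b * (if a = b then c else d) =
      d * (f a * f b) + if a = b then (c - d) * f a ^ 2 else 0 := by
    split_ifs with hab
    · subst hab; ring
    · ring
  simp_rw [h, sum_add_distrib, sum_ite_eq, mem_univ, if_true, ← mul_sum]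
  rw [sq, sum_mul_sum]
  simp_rw [mul_sum]

lemma Finset.sum_offDiag_eq_sum_sum_ite {ι M : Type*} [Fintype ι] [DecidableEq ι]
    [AddCommMonoid M] (f : ι → ι → M) :
    ∑ p ∈ univ.offDiag, f p.1 p.2 = ∑ k, ∑ l, if k ≠ l then f k l else 0 := by
  rw [← sum_product' (f := fun k l => if k ≠ l then f k l else 0), ← sum_filter]
  congr 1
  ext
  simp [mem_offDiag]

lemma Finset.sum_sum_ite_ne_eq_sub {ι M : Type*} [Fintype ι] [DecidableEq ι] [AddCommGroup M]
    (f : ι → ι → M) :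
    ∑ k, ∑ l, (if k ≠ l then f k l else 0) = ∑ k, ∑ l, f k l - ∑ j, f j j := by
  rw [← sum_sub_distrib]
  refine sum_congr rfl fun k _ => eq_sub_of_add_eq ?_
  have hdiag := sum_ite_eq univ k (f k)
  rw [if_pos (mem_univ k)] at hdiag
  rw [← hdiag, ← sum_add_distrib]
  exact sum_congr rfl fun l _ => by split_ifs <;> simp_all

lemma Equiv.Perm.exists_apply_eq_and_apply_eq {ι : Type*} [DecidableEq ι] {j k j' k' : ι}
    (hjk : j ≠ k) (hjk' : j' ≠ k') : ∃ σ : Equiv.Perm ι, σ j' = j ∧ σ k' = k := by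
  have hne : Equiv.swap j' j k' ≠ j := by
    simpa using (Equiv.swap j' j).injective.ne hjk'.symm
  exact ⟨(Equiv.swap j' j).trans (Equiv.swap (Equiv.swap j' j k') k),
    by simp [Equiv.swap_apply_of_ne_of_ne hne.symm hjk], by simp⟩

namespace Matrix

section Idempotent

variable {ι : Type*} [Fintype ι] {M : Matrix ι ι ℝ}

lemma sum_sq_apply_eq_diag_of_idem (hsymm : Mᵀ = M) (hidem : M * M = M) (k : ι) :
    ∑ l, M k l ^ 2 = M k k := by
  conv_rhs => rw [← hidem, mul_apply]
  refine sum_congr rfl fun l _ => ?_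
  rw [sq, ← transpose_apply M l k, hsymm]

lemma sum_sum_sq_eq_trace_of_idem (hsymm : Mᵀ = M) (hidem : M * M = M) :
    ∑ k, ∑ l, M k l ^ 2 = M.trace :=
  sum_congr rfl fun k _ => sum_sq_apply_eq_diag_of_idem hsymm hidem k

lemma abs_apply_le_one_of_idem (hsymm : Mᵀ = M) (hidem : M * M = M) (k l : ι) :
    |M k l| ≤ 1 := by
  have hrow := sum_sq_apply_eq_diag_of_idem hsymm hidem k
  have hle (l : ι) : M k l ^ 2 ≤ M k k :=
    hrow ▸ single_le_sum (f := fun l => M k l ^ 2) (fun _ _ => sq_nonneg _) (mem_univ l)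
  have hdiag : M k k ≤ 1 := by nlinarith [hle k]
  exact (sq_le_one_iff_abs_le_one _).mp ((hle l).trans hdiag)

end Idempotent

variable {m n : Type*} [Fintype m] [Fintype n] [DecidableEq m] [DecidableEq n]

/-- For `B` of full row rank, the orthogonal projection onto the kernel of `B`. -/
def kerProj (B : Matrix m n ℝ) : Matrix n n ℝ := 1 - Bᵀ * (B * Bᵀ)⁻¹ * B

lemma kerProj_transpose (B : Matrix m n ℝ) : (kerProj B)ᵀ = kerProj B := by
  simp [kerProj, transpose_nonsing_inv, Matrix.mul_assoc]

lemma kerProj_mul_self {B : Matrix m n ℝ} (h : (B * Bᵀ).det ≠ 0) :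
    kerProj B * kerProj B = kerProj B := by
  have hinv : (B * Bᵀ)⁻¹ * (B * Bᵀ) = 1 := nonsing_inv_mul _ (isUnit_iff_ne_zero.mpr h)
  have : Bᵀ * (B * Bᵀ)⁻¹ * B * (Bᵀ * (B * Bᵀ)⁻¹ * B) = Bᵀ * (B * Bᵀ)⁻¹ * B := by
    simp only [Matrix.mul_assoc]
    rw [← Matrix.mul_assoc B, ← Matrix.mul_assoc _ (B * Bᵀ), hinv, Matrix.one_mul]
  simp only [kerProj, Matrix.sub_mul, Matrix.mul_sub, Matrix.one_mul, Matrix.mul_one, this]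
  abel

lemma trace_kerProj {B : Matrix m n ℝ} (h : (B * Bᵀ).det ≠ 0) :
    (kerProj B).trace = Fintype.card n - Fintype.card m := by
  rw [kerProj, trace_sub, trace_one, trace_mul_comm, ← Matrix.mul_assoc,
    mul_nonsing_inv _ (isUnit_iff_ne_zero.mpr h), trace_one]

/-- Holds for every `B`: when `B * Bᵀ` is singular, its junk inverse is `0` and `kerProj B = 1`. -/
lemma abs_kerProj_apply_le_one (B : Matrix m n ℝ) (k l : n) : |kerProj B k l| ≤ 1 := by
  by_cases h : (B * Bᵀ).det = 0
  · rw [kerProj, nonsing_inv_apply_not_isUnit _ (by simpa using h)]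
    by_cases hkl : k = l <;> simp [hkl]
  · exact abs_apply_le_one_of_idem (kerProj_transpose B) (kerProj_mul_self h) k l

lemma measurable_kerProj_apply (k l : n) :
    Measurable fun b : m → n → ℝ => kerProj (of b) k l := by
  have hdet : Measurable fun b : m → n → ℝ => (of b * (of b)ᵀ).det :=
    (by fun_prop : Continuous _).measurable
  have hadj (a c : m) : Measurable fun b : m → n → ℝ => (of b * (of b)ᵀ).adjugate a c :=
    (by fun_prop : Continuous _).measurable
  simp only [kerProj, inv_def, Ring.inverse_eq_inv', sub_apply, mul_apply, smul_apply,
    transpose_apply, smul_eq_mul]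
  fun_prop

end Matrix

section SelfNormalized

variable {ι : Type*} [Fintype ι]

def selfNormalize (x : ι → ℝ) : ι → ℝ := fun j => x j / √(∑ k, x k ^ 2)

lemma abs_selfNormalize_le_one (x : ι → ℝ) (j : ι) : |selfNormalize x j| ≤ 1 := by
  rw [selfNormalize, abs_div, abs_of_nonneg (Real.sqrt_nonneg _), ← Real.sqrt_sq_eq_abs]
  exact div_le_one_of_le₀ (Real.sqrt_le_sqrt (single_le_sum (f := fun k => x k ^ 2)
    (fun _ _ => sq_nonneg _) (mem_univ j))) (Real.sqrt_nonneg _)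

lemma selfNormalize_mem_closedBall (x : ι → ℝ) : selfNormalize x ∈ Metric.closedBall 0 1 :=
  mem_closedBall_zero_iff.mpr <|
    (pi_norm_le_iff_of_nonneg zero_le_one).mpr fun j => abs_selfNormalize_le_one x j

lemma sum_selfNormalize_sq {x : ι → ℝ} (hx : x ≠ 0) : ∑ j, selfNormalize x j ^ 2 = 1 := by
  obtain ⟨j, hj⟩ := Function.ne_iff.mp hx
  have hj : x j ≠ 0 := hj
  have hpos : 0 < ∑ k, x k ^ 2 := lt_of_lt_of_le (by positivity)
    (single_le_sum (f := fun k => x k ^ 2) (fun _ _ => sq_nonneg _) (mem_univ j))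
  simp_rw [selfNormalize, div_pow, Real.sq_sqrt hpos.le, ← sum_div, div_self hpos.ne']

lemma selfNormalize_comp_perm (x : ι → ℝ) (σ : Equiv.Perm ι) :
    selfNormalize (x ∘ σ) = selfNormalize x ∘ σ := by
  ext j
  simp [selfNormalize, Equiv.sum_comp σ fun k => x k ^ 2]

lemma measurable_selfNormalize : Measurable (selfNormalize : (ι → ℝ) → ι → ℝ) :=
  measurable_pi_lambda _ fun j => by unfold selfNormalize; fun_prop

lemma integrable_comp_selfNormalize {μ : Measure (ι → ℝ)} [IsFiniteMeasure μ]
    (g : (ι → ℝ) → ℝ) (hg : Continuous g) : Integrable (fun x => g (selfNormalize x)) μ :=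
  hg.integrable_comp_of_ae_mem_compact measurable_selfNormalize.aemeasurable
    (isCompact_closedBall 0 1) (ae_of_all _ selfNormalize_mem_closedBall)

lemma ae_ne_zero_pi [Nonempty ι] {ν : Measure ℝ} [IsProbabilityMeasure ν] (hν : ν {0} = 0) :
    ∀ᵐ x ∂(Measure.pi fun _ : ι => ν), x ≠ 0 := by
  obtain ⟨j⟩ := ‹Nonempty ι›
  have hj : ∀ᵐ x ∂(Measure.pi fun _ : ι => ν), x j ≠ 0 := by
    rw [ae_iff]
    simp only [ne_eq, not_not]
    exact ((measurePreserving_eval (fun _ : ι => ν) j).measure_preimage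
      (measurableSet_singleton 0).nullMeasurableSet).trans hν
  filter_upwards [hj] with x hx h
  exact hx (by simp [h])

def Exchangeable (μ : Measure (ι → ℝ)) : Prop :=
  ∀ σ : Equiv.Perm ι, MeasurePreserving (fun x => x ∘ σ) μ μ

lemma exchangeable_pi {ν : Measure ℝ} [SigmaFinite ν] :
    Exchangeable (Measure.pi fun _ : ι => ν) := fun σ => by
  convert measurePreserving_piCongrLeft (fun _ : ι => ν) σ.symm using 1
  ext x j
  simp [MeasurableEquiv.coe_piCongrLeft, Equiv.piCongrLeft_apply]

variable {μ : Measure (ι → ℝ)}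

lemma Exchangeable.integral_comp_selfNormalize_perm (h : Exchangeable μ) (σ : Equiv.Perm ι)
    {g : (ι → ℝ) → ℝ} (hg : Measurable g) :
    ∫ x, g (selfNormalize x ∘ σ) ∂μ = ∫ x, g (selfNormalize x) ∂μ := by
  simp_rw [← selfNormalize_comp_perm]
  exact (h σ).integral_comp_of_aestronglyMeasurable
    (hg.comp measurable_selfNormalize).aestronglyMeasurable

def diagForm (Q : Matrix ι ι ℝ) (v : ι → ℝ) : ℝ :=
  ∑ j, Q j j * (Fintype.card ι * v j ^ 2 - 1)

variable [DecidableEq ι]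

def offDiagForm (Q : Matrix ι ι ℝ) (v : ι → ℝ) : ℝ :=
  ∑ p ∈ univ.offDiag, Q p.1 p.2 * (Fintype.card ι * v p.1 * v p.2)

def signFlip (m : ι) (x : ι → ℝ) : ι → ℝ := fun j => if j = m then -x j else x j

lemma selfNormalize_signFlip (m : ι) (x : ι → ℝ) :
    selfNormalize (signFlip m x) = signFlip m (selfNormalize x) := by
  have hsum : ∑ k, signFlip m x k ^ 2 = ∑ k, x k ^ 2 :=
    sum_congr rfl fun k _ => by unfold signFlip; split_ifs <;> ring
  ext j
  simp only [selfNormalize, hsum]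
  simp only [signFlip, selfNormalize]
  split_ifs <;> ring

def SignInvariant (μ : Measure (ι → ℝ)) : Prop :=
  ∀ m : ι, MeasurePreserving (signFlip m) μ μ

lemma signInvariant_pi {ν : Measure ℝ} [SigmaFinite ν] (hν : ν.map Neg.neg = ν) :
    SignInvariant (Measure.pi fun _ : ι => ν) :=
  fun m => measurePreserving_pi (f := fun j t => if j = m then -t else t) _ _ fun j => by
    by_cases hj : j = m
    · simpa [hj] using (⟨measurable_neg, hν⟩ : MeasurePreserving Neg.neg ν ν)
    · simp only [hj, if_false]
      exact .id ν

lemma SignInvariant.integral_comp_selfNormalize_eq_zero (h : SignInvariant μ) (m : ι)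
    {g : (ι → ℝ) → ℝ} (hg : Measurable g) (hodd : ∀ v, g (signFlip m v) = -g v) :
    ∫ x, g (selfNormalize x) ∂μ = 0 := by
  have := (h m).integral_comp_of_aestronglyMeasurable
    (hg.comp measurable_selfNormalize).aestronglyMeasurable
  simp_rw [Function.comp_apply, selfNormalize_signFlip, hodd, integral_neg] at this
  linarith

local notation "N" => (Fintype.card ι : ℝ)

local notation "y" => selfNormalize

lemma Exchangeable.integral_pow_eq (hex : Exchangeable μ) (p : ℕ) (j j' : ι) :
    ∫ x, y x j ^ p ∂μ = ∫ x, y x j' ^ p ∂μ := by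
  simpa using hex.integral_comp_selfNormalize_perm (Equiv.swap j j')
    (measurable_pi_apply j' |>.pow_const p)

lemma Exchangeable.integral_sq_mul_sq_eq (hex : Exchangeable μ) {j k j' k' : ι} (hjk : j ≠ k)
    (hjk' : j' ≠ k') : ∫ x, y x j ^ 2 * y x k ^ 2 ∂μ = ∫ x, y x j' ^ 2 * y x k' ^ 2 ∂μ := by
  obtain ⟨σ, hj, hk⟩ := Equiv.Perm.exists_apply_eq_and_apply_eq hjk hjk'
  simpa [hj, hk] using hex.integral_comp_selfNormalize_perm σ
    (((measurable_pi_apply j').pow_const 2).mul ((measurable_pi_apply k').pow_const 2))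

lemma Exchangeable.integral_sq_mul_sq (hex : Exchangeable μ) {j₀ j₁ : ι} (h : j₀ ≠ j₁)
    (a b : ι) : ∫ x, y x a ^ 2 * y x b ^ 2 ∂μ =
      if a = b then ∫ x, y x j₀ ^ 4 ∂μ else ∫ x, y x j₀ ^ 2 * y x j₁ ^ 2 ∂μ := by
  split_ifs with hab
  · subst hab
    simp_rw [← pow_add]
    exact hex.integral_pow_eq 4 a j₀
  · exact hex.integral_sq_mul_sq_eq hab h

lemma Exchangeable.integral_sq [IsProbabilityMeasure μ] (hex : Exchangeable μ)
    (hne : ∀ᵐ x ∂μ, x ≠ 0) (j : ι) :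
    ∫ x, y x j ^ 2 ∂μ = N⁻¹ := by
  have hsum : ∑ k, ∫ x, y x k ^ 2 ∂μ = 1 := by
    rw [← integral_finsetSum _ fun k _ => integrable_comp_selfNormalize (· k ^ 2) (by fun_prop),
      integral_congr_ae (hne.mono fun x hx => sum_selfNormalize_sq hx), integral_const]
    simp
  simp_rw [hex.integral_pow_eq 2 _ j, sum_const, card_univ, nsmul_eq_mul] at hsum
  exact eq_inv_of_mul_eq_one_right hsum

lemma Exchangeable.card_mul_integral_pow_four_add_eq_one [IsProbabilityMeasure μ]
    (hex : Exchangeable μ) (hne : ∀ᵐ x ∂μ, x ≠ 0) {j₀ j₁ : ι} (h : j₀ ≠ j₁) :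
    N * ∫ x, y x j₀ ^ 4 ∂μ + N * (N - 1) * ∫ x, y x j₀ ^ 2 * y x j₁ ^ 2 ∂μ = 1 := by
  have hsq : ∫ x, (∑ j, 1 * y x j ^ 2) ^ 2 ∂μ = 1 := by
    rw [integral_congr_ae (g := fun _ => 1) (hne.mono fun x hx => by
      simp only [one_mul, sum_selfNormalize_sq hx, one_pow])]
    simp
  rw [integral_sq_sum_mul univ _ fun j _ k _ => integrable_comp_selfNormalize
    (fun v => v j ^ 2 * v k ^ 2) (by fun_prop)] at hsq
  set m₄ := ∫ x, y x j₀ ^ 4 ∂μ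
  set m₂₂ := ∫ x, y x j₀ ^ 2 * y x j₁ ^ 2 ∂μ
  have hmom (a b : ι) : ∫ x, y x a ^ 2 * y x b ^ 2 ∂μ = if a = b then m₄ else m₂₂ :=
    hex.integral_sq_mul_sq h a b
  simp only [hmom, Finset.sum_sum_mul_mul_ite_eq, sum_const, card_univ, nsmul_eq_mul] at hsq
  linear_combination hsq

lemma Exchangeable.integral_centered_sq_mul [IsProbabilityMeasure μ] (hex : Exchangeable μ)
    (hne : ∀ᵐ x ∂μ, x ≠ 0) {j₀ j₁ : ι} (h : j₀ ≠ j₁) (a b : ι) :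
    ∫ x, (N * y x a ^ 2 - 1) * (N * y x b ^ 2 - 1) ∂μ =
      if a = b then N ^ 2 * ∫ x, y x j₀ ^ 4 ∂μ - 1
      else N ^ 2 * ∫ x, y x j₀ ^ 2 * y x j₁ ^ 2 ∂μ - 1 := by
  have hexp (x : ι → ℝ) : (N * y x a ^ 2 - 1) * (N * y x b ^ 2 - 1) =
      N ^ 2 * (y x a ^ 2 * y x b ^ 2) - N * y x a ^ 2 - N * y x b ^ 2 + 1 := by ring
  have hsq (c : ι) : Integrable (fun x => y x c ^ 2) μ :=
    integrable_comp_selfNormalize (· c ^ 2) (by fun_prop)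
  have hsq_mul : Integrable (fun x => y x a ^ 2 * y x b ^ 2) μ :=
    integrable_comp_selfNormalize (fun v => v a ^ 2 * v b ^ 2) (by fun_prop)
  simp_rw [hexp]
  rw [integral_add, integral_sub, integral_sub, integral_const_mul, integral_const_mul,
    integral_const_mul, hex.integral_sq hne, hex.integral_sq hne, hex.integral_sq_mul_sq h]
  · have : Nonempty ι := ⟨a⟩
    split_ifs <;> simp
  all_goals fun_prop

theorem Exchangeable.integral_diagForm_sq [IsProbabilityMeasure μ] [Nontrivial ι]
    (hex : Exchangeable μ) (hne : ∀ᵐ x ∂μ, x ≠ 0) (Q : Matrix ι ι ℝ) (j₀ : ι) :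
    ∫ x, diagForm Q (y x) ^ 2 ∂μ =
      (Q.trace ^ 2 - N * ∑ j, Q j j ^ 2) / (N - 1) * (1 - N ^ 2 * ∫ x, y x j₀ ^ 4 ∂μ) := by
  obtain ⟨j₁, h⟩ := exists_ne j₀
  have hN : N - 1 ≠ 0 := sub_ne_zero.mpr (by exact_mod_cast Fintype.one_lt_card.ne')
  have hrel := hex.card_mul_integral_pow_four_add_eq_one hne h.symm
  set m₄ := ∫ x, y x j₀ ^ 4 ∂μ
  set m₂₂ := ∫ x, y x j₀ ^ 2 * y x j₁ ^ 2 ∂μ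
  have hcov (a b : ι) : ∫ x, (N * y x a ^ 2 - 1) * (N * y x b ^ 2 - 1) ∂μ =
      if a = b then N ^ 2 * m₄ - 1 else N ^ 2 * m₂₂ - 1 :=
    hex.integral_centered_sq_mul hne h.symm a b
  simp only [diagForm]
  rw [integral_sq_sum_mul univ _ fun a _ b _ => integrable_comp_selfNormalize
    (fun v => (N * v a ^ 2 - 1) * (N * v b ^ 2 - 1)) (by fun_prop)]
  simp only [hcov, Finset.sum_sum_mul_mul_ite_eq, Matrix.trace, Matrix.diag]
  rw [div_mul_eq_mul_div, eq_div_iff hN]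
  linear_combination (N * (∑ j, Q j j) ^ 2 - N * ∑ j, Q j j ^ 2) * hrel

lemma SignInvariant.integral_mul_mul_mul_eq_zero (hsi : SignInvariant μ) {k l k' l' : ι}
    (hkl : k ≠ l) (hkl' : k' ≠ l') (hne : (k', l') ≠ (k, l)) (hne' : (k', l') ≠ (l, k)) :
    ∫ x, y x k * y x l * (y x k' * y x l') ∂μ = 0 := by
  have hodd (m : ι) (hk : k ≠ m) (hl : l ≠ m) (hm : k' = m ∨ l' = m) (v : ι → ℝ) :
      signFlip m v k * signFlip m v l * (signFlip m v k' * signFlip m v l') =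
        -(v k * v l * (v k' * v l')) := by
    rcases hm with rfl | rfl <;> simp [signFlip, hk, hl, hkl', hkl'.symm]
  have hg : Measurable fun v : ι → ℝ => v k * v l * (v k' * v l') := by fun_prop
  by_cases hk : k' = k
  · subst hk
    exact hsi.integral_comp_selfNormalize_eq_zero l' hg
      (hodd l' hkl' (fun h => hne (by rw [h])) (.inr rfl))
  by_cases hl : k' = l
  · subst hl
    exact hsi.integral_comp_selfNormalize_eq_zero l' hg
      (hodd l' (fun h => hne' (by rw [h])) hkl' (.inr rfl))
  exact hsi.integral_comp_selfNormalize_eq_zero k' hg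
    (hodd k' (Ne.symm hk) (Ne.symm hl) (.inl rfl))

theorem Exchangeable.integral_offDiagForm_sq [IsFiniteMeasure μ] (hex : Exchangeable μ)
    (hsi : SignInvariant μ) {Q : Matrix ι ι ℝ} (hQ : Qᵀ = Q) {j₀ j₁ : ι} (h : j₀ ≠ j₁) :
    ∫ x, offDiagForm Q (y x) ^ 2 ∂μ =
      2 * N ^ 2 * (∫ x, y x j₀ ^ 2 * y x j₁ ^ 2 ∂μ) * (∑ k, ∑ l, Q k l ^ 2 - ∑ j, Q j j ^ 2) := by
  set m₂₂ := ∫ x, y x j₀ ^ 2 * y x j₁ ^ 2 ∂μ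
  have hfac (a b c d : ι) : ∫ x, N * y x a * y x b * (N * y x c * y x d) ∂μ =
      N ^ 2 * ∫ x, y x a * y x b * (y x c * y x d) ∂μ := by
    rw [← integral_const_mul]
    congr 1 with x
    ring
  have hpair {a b : ι} (hab : a ≠ b) : ∫ x, y x a * y x b * (y x a * y x b) ∂μ = m₂₂ := by
    refine (integral_congr_ae (ae_of_all _ fun x => ?_)).trans (hex.integral_sq_mul_sq_eq hab h)
    ring
  have hrow (p : ι × ι) (hp : p ∈ univ.offDiag) : ∑ p' ∈ univ.offDiag,
      Q p.1 p.2 * Q p'.1 p'.2 * ∫ x, N * y x p.1 * y x p.2 * (N * y x p'.1 * y x p'.2) ∂μ =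
        2 * N ^ 2 * m₂₂ * Q p.1 p.2 ^ 2 := by
    obtain ⟨k, l⟩ := p
    have hkl : k ≠ l := (mem_offDiag.mp hp).2.2
    have hlk : (l, k) ∈ univ.offDiag.erase (k, l) := by simp [hkl, hkl.symm]
    rw [← add_sum_erase _ _ hp, ← add_sum_erase _ _ hlk, sum_eq_zero]
    · have hswap : ∫ x, y x k * y x l * (y x l * y x k) ∂μ = m₂₂ := by
        rw [← hpair hkl]
        congr 1 with x
        ring
      simp only [hfac, hpair hkl, hswap, ← transpose_apply Q k l, hQ]
      ring
    · intro p' hp'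
      obtain ⟨hp'lk, hp'kl, hp'⟩ := by simpa only [mem_erase] using hp'
      rw [hfac, hsi.integral_mul_mul_mul_eq_zero hkl (mem_offDiag.mp hp').2.2 hp'kl hp'lk]
      ring
  simp only [offDiagForm]
  rw [integral_sq_sum_mul _ _ fun p _ p' _ => integrable_comp_selfNormalize
    (fun v => N * v p.1 * v p.2 * (N * v p'.1 * v p'.2)) (by fun_prop), sum_congr rfl hrow,
    ← mul_sum, sum_offDiag_eq_sum_sum_ite (fun k l => Q k l ^ 2), sum_sum_ite_ne_eq_sub]

end SelfNormalized

section RandomArray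

def rowVec (X : ℕ → ℕ → Ω → ℝ) (n r : ℕ) (ω : Ω) : Fin n → ℝ := fun j => X r j ω

def firstRows (X : ℕ → ℕ → Ω → ℝ) (n i : ℕ) (ω : Ω) : Fin i → Fin n → ℝ :=
  fun a b => X a b ω

variable {X : ℕ → ℕ → Ω → ℝ} {n i : ℕ}

lemma Ynorm_eq_selfNormalize (r : ℕ) (j : Fin n) (ω : Ω) :
    Ynorm X n r j ω = selfNormalize (rowVec X n r ω) j := by
  simp [Ynorm, rowNorm, selfNormalize, rowVec,
    ← Fin.sum_univ_eq_sum_range (fun k => X r k ω ^ 2)]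

lemma Udiag_eq_diagForm (ω : Ω) :
    Udiag X n i ω = diagForm (qmat X n i ω) (selfNormalize (rowVec X n i ω)) := by
  simp [Udiag, diagForm, Ynorm_eq_selfNormalize]

lemma Voff_eq_offDiagForm (ω : Ω) :
    Voff X n i ω = offDiagForm (qmat X n i ω) (selfNormalize (rowVec X n i ω)) := by
  rw [offDiagForm, sum_offDiag_eq_sum_sum_ite fun k l => qmat X n i ω k l *
    (Fintype.card (Fin n) * selfNormalize (rowVec X n i ω) k * selfNormalize (rowVec X n i ω) l)]
  simp [Voff, Ynorm_eq_selfNormalize, mul_assoc]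

lemma qmat_eq_smul_kerProj (ω : Ω) :
    qmat X n i ω = ((n : ℝ) - i)⁻¹ • kerProj (Bmat X n i ω) :=
  rfl

lemma qmat_transpose (ω : Ω) : (qmat X n i ω)ᵀ = qmat X n i ω := by
  rw [qmat_eq_smul_kerProj, transpose_smul, kerProj_transpose]

lemma abs_qmat_apply_le (hin : i < n) (ω : Ω) (k l : Fin n) :
    |qmat X n i ω k l| ≤ ((n : ℝ) - i)⁻¹ := by
  have hc : 0 < (n : ℝ) - i := sub_pos.mpr (by exact_mod_cast hin)
  rw [qmat_eq_smul_kerProj, Matrix.smul_apply, smul_eq_mul, abs_mul, abs_of_pos (inv_pos.mpr hc)]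
  exact mul_le_of_le_one_right (inv_pos.mpr hc).le (abs_kerProj_apply_le_one _ k l)

lemma trace_qmat (hin : i < n) {ω : Ω} (h : (Bmat X n i ω * (Bmat X n i ω)ᵀ).det ≠ 0) :
    (qmat X n i ω).trace = 1 := by
  have hc : (n : ℝ) - i ≠ 0 := sub_ne_zero.mpr (by exact_mod_cast hin.ne')
  rw [qmat_eq_smul_kerProj, trace_smul, trace_kerProj h, Fintype.card_fin, Fintype.card_fin,
    smul_eq_mul, inv_mul_cancel₀ hc]

lemma sum_sum_sq_qmat (hin : i < n) {ω : Ω} (h : (Bmat X n i ω * (Bmat X n i ω)ᵀ).det ≠ 0) :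
    ∑ k, ∑ l, qmat X n i ω k l ^ 2 = ((n : ℝ) - i)⁻¹ := by
  have hc : (n : ℝ) - i ≠ 0 := sub_ne_zero.mpr (by exact_mod_cast hin.ne')
  have hP := sum_sum_sq_eq_trace_of_idem (kerProj_transpose _) (kerProj_mul_self h)
  rw [trace_kerProj h, Fintype.card_fin, Fintype.card_fin] at hP
  simp_rw [qmat_eq_smul_kerProj, Matrix.smul_apply, smul_eq_mul, mul_pow, ← mul_sum]
  rw [hP]
  field_simp

variable [MeasurableSpace Ω] {P : Measure Ω}

lemma measurable_rowVec (hmeas : ∀ i j, Measurable (X i j)) (r : ℕ) :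
    Measurable (rowVec X n r) :=
  measurable_pi_lambda _ fun j => hmeas r j

lemma map_rowVec (hmeas : ∀ i j, Measurable (X i j))
    (hindep : iIndepFun (fun ij : ℕ × ℕ => X ij.1 ij.2) P)
    (hident : ∀ i j, Measure.map (X i j) P = Measure.map (X 0 0) P) (r : ℕ) :
    P.map (rowVec X n r) = Measure.pi fun _ => P.map (X 0 0) := by
  have hrow := iIndepFun.map_fun_eq_pi_map (f := fun j : Fin n => X r j)
    (fun j => (hmeas r j).aemeasurable) (hindep.precomp (g := fun j : Fin n => (r, (j : ℕ)))
      fun a b hab => Fin.ext (congrArg Prod.snd hab))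
  simp only [hident] at hrow
  exact hrow

lemma indepFun_firstRows_rowVec (hmeas : ∀ i j, Measurable (X i j))
    (hindep : iIndepFun (fun ij : ℕ × ℕ => X ij.1 ij.2) P) :
    IndepFun (firstRows X n i) (rowVec X n i) P := by
  have hsplit := indep_iSup_of_disjoint (fun ij : ℕ × ℕ => (hmeas ij.1 ij.2).comap_le)
    ((iIndepFun_iff_iIndep _ _ _).mp hindep) (S := {p | p.1 < i}) (T := {p | p.1 = i})
    (Set.disjoint_left.mpr fun p hS hT => Nat.ne_of_lt hS hT)
  rw [IndepFun_iff_Indep]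
  refine indep_of_indep_of_le hsplit ?_ ?_ <;>
    simp only [firstRows, rowVec, MeasurableSpace.pi, MeasurableSpace.comap_iSup,
      MeasurableSpace.comap_comp, Function.comp_def]
  · exact iSup_le fun a => iSup_le fun b => le_iSup₂_of_le ((a : ℕ), (b : ℕ)) a.isLt le_rfl
  · exact iSup_le fun b => le_iSup₂_of_le (i, (b : ℕ)) rfl le_rfl

lemma measurable_smul_kerProj :
    Measurable fun (b : Fin i → Fin n → ℝ) (k l : Fin n) =>
      ((n : ℝ) - i)⁻¹ * kerProj (of b) k l :=
  measurable_pi_lambda _ fun k => measurable_pi_lambda _ fun l =>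
    (measurable_kerProj_apply k l).const_mul _

lemma measurable_qmat (hmeas : ∀ i j, Measurable (X i j)) :
    Measurable (β := Fin n → Fin n → ℝ) fun ω => qmat X n i ω :=
  measurable_smul_kerProj.comp <|
    measurable_pi_lambda _ fun a => measurable_pi_lambda _ fun b => hmeas a b

lemma integrable_comp_qmat_selfNormalize_rowVec [IsFiniteMeasure P]
    (hmeas : ∀ i j, Measurable (X i j)) (hin : i < n)
    {G : (Fin n → Fin n → ℝ) × (Fin n → ℝ) → ℝ} (hG : Continuous G) :
    Integrable (fun ω => G (qmat X n i ω, selfNormalize (rowVec X n i ω))) P := by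
  have hc : 0 ≤ ((n : ℝ) - i)⁻¹ := inv_nonneg.mpr (sub_nonneg.mpr (by exact_mod_cast hin.le))
  refine hG.integrable_comp_of_ae_mem_compact
    ((measurable_qmat hmeas).prodMk
      (measurable_selfNormalize.comp (measurable_rowVec hmeas i))).aemeasurable
    ((isCompact_closedBall 0 ((n : ℝ) - i)⁻¹).prod (isCompact_closedBall 0 1))
    (ae_of_all _ fun ω => ⟨mem_closedBall_zero_iff.mpr ?_, selfNormalize_mem_closedBall _⟩)
  exact (pi_norm_le_iff_of_nonneg hc).mpr fun k => (pi_norm_le_iff_of_nonneg hc).mpr fun l =>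
    abs_qmat_apply_le hin ω k l

lemma integral_comp_qmat_selfNormalize_rowVec [IsFiniteMeasure P]
    (hmeas : ∀ i j, Measurable (X i j))
    (hindep : iIndepFun (fun ij : ℕ × ℕ => X ij.1 ij.2) P)
    (hident : ∀ i j, Measure.map (X i j) P = Measure.map (X 0 0) P) (hin : i < n)
    {G : (Fin n → Fin n → ℝ) × (Fin n → ℝ) → ℝ} (hG : Continuous G) :
    ∫ ω, G (qmat X n i ω, selfNormalize (rowVec X n i ω)) ∂P =
      ∫ ω, ∫ x, G (qmat X n i ω, selfNormalize x) ∂(Measure.pi fun _ => P.map (X 0 0)) ∂P := by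
  rw [← map_rowVec hmeas hindep hident i]
  exact ((indepFun_firstRows_rowVec hmeas hindep).comp measurable_smul_kerProj measurable_id
    ).integral_comp_eq_integral_integral_map (measurable_qmat hmeas) (measurable_rowVec hmeas i)
    (hG.measurable.comp (measurable_fst.prodMk (measurable_selfNormalize.comp measurable_snd)))
    (integrable_comp_qmat_selfNormalize_rowVec hmeas hin hG)

lemma integral_comp_Ynorm (hmeas : ∀ i j, Measurable (X i j))
    (hindep : iIndepFun (fun ij : ℕ × ℕ => X ij.1 ij.2) P)
    (hident : ∀ i j, Measure.map (X i j) P = Measure.map (X 0 0) P) (r : ℕ)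
    {g : (Fin n → ℝ) → ℝ} (hg : Measurable g) :
    ∫ ω, g (fun j => Ynorm X n r j ω) ∂P =
      ∫ x, g (selfNormalize x) ∂(Measure.pi fun _ => P.map (X 0 0)) := by
  simp_rw [Ynorm_eq_selfNormalize, ← map_rowVec hmeas hindep hident r]
  exact (integral_map (measurable_rowVec hmeas r).aemeasurable
    (hg.comp measurable_selfNormalize).aestronglyMeasurable).symm

end RandomArray

section SecondMoments

variable [MeasurableSpace Ω] {P : Measure Ω} [IsProbabilityMeasure P] {X : ℕ → ℕ → Ω → ℝ}
  {n i : ℕ}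

theorem integral_Udiag_sq (hmeas : ∀ i j, Measurable (X i j))
    (hindep : iIndepFun (fun ij : ℕ × ℕ => X ij.1 ij.2) P)
    (hident : ∀ i j, Measure.map (X i j) P = Measure.map (X 0 0) P)
    (hzero : P {ω | X 0 0 ω = 0} = 0) (hn : 2 ≤ n) (hin : i < n)
    (hasinv : ∀ᵐ ω ∂P, (Bmat X n i ω * (Bmat X n i ω)ᵀ).det ≠ 0) (j₀ : Fin n) :
    ∫ ω, Udiag X n i ω ^ 2 ∂P =
      (1 - (n : ℝ) * ∫ ω, ∑ l, qmat X n i ω l l ^ 2 ∂P) / ((n : ℝ) - 1) *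
        (1 - (n : ℝ) ^ 2 * ∫ x, selfNormalize x j₀ ^ 4 ∂(Measure.pi fun _ => P.map (X 0 0))) := by
  have : IsProbabilityMeasure (P.map (X 0 0)) :=
    Measure.isProbabilityMeasure_map (hmeas 0 0).aemeasurable
  have : Nontrivial (Fin n) := Fin.nontrivial_iff_two_le.mpr hn
  have hne := ae_ne_zero_pi (ι := Fin n) (ν := P.map (X 0 0))
    (by rwa [Measure.map_apply (hmeas 0 0) (measurableSet_singleton 0)])
  have hS2 := integrable_comp_qmat_selfNormalize_rowVec (P := P) hmeas hin
    (G := fun p => ∑ l, p.1 l l ^ 2) (by fun_prop)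
  simp_rw [Udiag_eq_diagForm]
  rw [integral_comp_qmat_selfNormalize_rowVec hmeas hindep hident hin
    (G := fun p => diagForm p.1 p.2 ^ 2) (by unfold diagForm; fun_prop)]
  dsimp only at hS2 ⊢
  simp only [exchangeable_pi.integral_diagForm_sq hne _ j₀, Fintype.card_fin]
  set β₄ := ∫ x, selfNormalize x j₀ ^ 4 ∂(Measure.pi fun _ => P.map (X 0 0))
  rw [integral_congr_ae (g := fun ω => (1 - n * ∑ j, qmat X n i ω j j ^ 2) / (n - 1) *
      (1 - n ^ 2 * β₄)) (hasinv.mono fun ω h => by simp only [trace_qmat hin h, one_pow]),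
    integral_mul_const, integral_div, integral_sub (integrable_const 1) (hS2.const_mul _),
    integral_const_mul]
  simp

theorem integral_Voff_sq (hmeas : ∀ i j, Measurable (X i j))
    (hindep : iIndepFun (fun ij : ℕ × ℕ => X ij.1 ij.2) P)
    (hident : ∀ i j, Measure.map (X i j) P = Measure.map (X 0 0) P)
    (hsymm : Measure.map (fun ω => -X 0 0 ω) P = Measure.map (X 0 0) P) (hin : i < n)
    (hasinv : ∀ᵐ ω ∂P, (Bmat X n i ω * (Bmat X n i ω)ᵀ).det ≠ 0) {j₀ j₁ : Fin n} (h : j₀ ≠ j₁) :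
    ∫ ω, Voff X n i ω ^ 2 ∂P =
      2 * (n : ℝ) ^ 2 * (∫ x, selfNormalize x j₀ ^ 2 * selfNormalize x j₁ ^ 2
        ∂(Measure.pi fun _ => P.map (X 0 0))) *
        (1 / ((n : ℝ) - i) - ∫ ω, ∑ l, qmat X n i ω l l ^ 2 ∂P) := by
  have : IsProbabilityMeasure (P.map (X 0 0)) :=
    Measure.isProbabilityMeasure_map (hmeas 0 0).aemeasurable
  have hsi := signInvariant_pi (ι := Fin n) (ν := P.map (X 0 0))
    (by rw [Measure.map_map measurable_neg (hmeas 0 0)]; exact hsymm)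
  have hS2 := integrable_comp_qmat_selfNormalize_rowVec (P := P) hmeas hin
    (G := fun p => ∑ l, p.1 l l ^ 2) (by fun_prop)
  simp_rw [Voff_eq_offDiagForm]
  rw [integral_comp_qmat_selfNormalize_rowVec hmeas hindep hident hin
    (G := fun p => offDiagForm p.1 p.2 ^ 2) (by unfold offDiagForm; fun_prop)]
  dsimp only at hS2 ⊢
  simp only [exchangeable_pi.integral_offDiagForm_sq hsi (qmat_transpose _) h, Fintype.card_fin]
  set β₂₂ := ∫ x, selfNormalize x j₀ ^ 2 * selfNormalize x j₁ ^ 2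
    ∂(Measure.pi fun _ => P.map (X 0 0))
  rw [integral_congr_ae (g := fun ω => 2 * n ^ 2 * β₂₂ *
      (((n : ℝ) - i)⁻¹ - ∑ j, qmat X n i ω j j ^ 2))
      (hasinv.mono fun ω h => by simp only [sum_sum_sq_qmat hin h]),
    integral_const_mul, integral_sub (integrable_const _) hS2]
  simp

end SecondMoments

theorem second_moments_exact_general
    [MeasurableSpace Ω] (P : Measure Ω) [IsProbabilityMeasure P]
    (X : ℕ → ℕ → Ω → ℝ)
    (hmeas : ∀ i j, Measurable (X i j))
    (hindep : iIndepFun (fun ij : ℕ × ℕ => X ij.1 ij.2) P)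
    (hident : ∀ i j, Measure.map (X i j) P = Measure.map (X 0 0) P)
    (hsymm : Measure.map (fun ω => -X 0 0 ω) P = Measure.map (X 0 0) P)
    (hzero : P {ω | X 0 0 ω = 0} = 0)
    (n p i : ℕ) (hn : 2 ≤ n) (hpn : p ≤ n) (hi : i < p)
    (hasinv : ∀ᵐ ω ∂P, (Bmat X n i ω * (Bmat X n i ω)ᵀ).det ≠ 0) :
    ∫ ω, (Udiag X n i ω) ^ 2 ∂P =
      (1 - (n : ℝ) * ∫ ω, ∑ l : Fin n, (qmat X n i ω l l) ^ 2 ∂P) / ((n : ℝ) - 1) *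
        (1 - (n : ℝ) ^ 2 * ∫ ω, (Ynorm X n 0 0 ω) ^ 4 ∂P) ∧
    ∫ ω, (Voff X n i ω) ^ 2 ∂P =
      2 * (n : ℝ) ^ 2 * (∫ ω, (Ynorm X n 0 0 ω) ^ 2 * (Ynorm X n 0 1 ω) ^ 2 ∂P) *
        (1 / ((n : ℝ) - i) - ∫ ω, ∑ l : Fin n, (qmat X n i ω l l) ^ 2 ∂P) := by
  have hin : i < n := hi.trans_le hpn
  let j₀ : Fin n := ⟨0, by omega⟩
  let j₁ : Fin n := ⟨1, by omega⟩
  have hβ₄ := integral_comp_Ynorm hmeas hindep hident 0 (g := fun v => v j₀ ^ 4) (by fun_prop)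
  have hβ₂₂ := integral_comp_Ynorm hmeas hindep hident 0
    (g := fun v => v j₀ ^ 2 * v j₁ ^ 2) (by fun_prop)
  rw [hβ₄, hβ₂₂]
  exact ⟨integral_Udiag_sq hmeas hindep hident hzero hn hin hasinv _,
    integral_Voff_sq hmeas hindep hident hsymm hin hasinv (by simp [Fin.ext_iff])⟩

/-- Exact second moments of the diagonal and off-diagonal parts. -/
theorem second_moments_exact
    [MeasurableSpace Ω] (P : Measure Ω) [IsProbabilityMeasure P]
    (X : ℕ → ℕ → Ω → ℝ)
    (hmeas : ∀ i j, Measurable (X i j))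
    (hindep : iIndepFun (fun ij : ℕ × ℕ => X ij.1 ij.2) P)
    (hident : ∀ i j, Measure.map (X i j) P = Measure.map (X 0 0) P)
    (hsymm : Measure.map (fun ω => -X 0 0 ω) P = Measure.map (X 0 0) P)
    (hnondeg : ¬ ∃ c : ℝ, ∀ᵐ ω ∂P, X 0 0 ω = c)
    (hzero : P {ω | X 0 0 ω = 0} = 0)
    (n p i : ℕ) (hn : 2 ≤ n) (hpn : p ≤ n) (hi : i < p)
    (hasinv : ∀ᵐ ω ∂P, (Bmat X n i ω * (Bmat X n i ω)ᵀ).det ≠ 0) :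
    ∫ ω, (Udiag X n i ω) ^ 2 ∂P =
      (1 - (n : ℝ) * ∫ ω, ∑ l : Fin n, (qmat X n i ω l l) ^ 2 ∂P) / ((n : ℝ) - 1) *
        (1 - (n : ℝ) ^ 2 * ∫ ω, (Ynorm X n 0 0 ω) ^ 4 ∂P) ∧
    ∫ ω, (Voff X n i ω) ^ 2 ∂P =
      2 * (n : ℝ) ^ 2 * (∫ ω, (Ynorm X n 0 0 ω) ^ 2 * (Ynorm X n 0 1 ω) ^ 2 ∂P) *
        (1 / ((n : ℝ) - i) - ∫ ω, ∑ l : Fin n, (qmat X n i ω l l) ^ 2 ∂P) :=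
  second_moments_exact_general P X hmeas hindep hident hsymm hzero n p i hn hpn hi hasinv
end
end
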